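/- arXiv:0808.1910 — 8 statements merged into one kernel-verified Lean document; each statement's English description precedes it below -/
import Mathlib

section
/- The function 𝒥 : [0,∞)^W → ℝ defined by 𝒥(c) = sup_{z ∈ (0,∞)^Γ} Σ_{(σ,σ')∈W} c(σ,σ')(1 − z_{σ'}/z_σ) is convex and continuous on [0,∞)^W, and for every c ∈ [0,∞)^W it satisfies 0 ≤ 𝒥(c) ≤ Σ_{(σ,σ')∈W} c(σ,σ') < ∞. -/
open Finset

/-- `Jhat c z = Σ_{(σ,σ')∈W} c(σ,σ')(1 − z_{σ'}/z_σ)`, where `W` is the off-diagonal of `Γ × Γ`. -/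
noncomputable def Jhat {Γ : Type*} [Fintype Γ] [DecidableEq Γ]
    (c : Γ → Γ → ℝ) (z : Γ → ℝ) : ℝ :=
  ∑ p ∈ Finset.univ.filter (fun p : Γ × Γ => p.1 ≠ p.2), c p.1 p.2 * (1 - z p.2 / z p.1)

/-- `𝒥(c) = sup_{z ∈ (0,∞)^Γ} Jhat c z`. -/
noncomputable def Jfun {Γ : Type*} [Fintype Γ] [DecidableEq Γ] (c : Γ → Γ → ℝ) : ℝ :=
  ⨆ z : {z : Γ → ℝ // ∀ σ, 0 < z σ}, Jhat c z.1

/-!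
`𝒥` is a supremum of functions linear in `c`, each bounded by `Σ_W c` on the cone `[0,∞)^W`;
this gives convexity, lower semicontinuity and the bounds. For upper semicontinuity at `c₀`, any
`d` of the cone close to `c₀` dominates `s • c₀` on `W` for a fixed `s < 1`, so by sublinearity
`𝒥 d ≤ s 𝒥 c₀ + Σ_W (d - s c₀)`, which tends to `s 𝒥 c₀ + (1 - s) Σ_W c₀` as `d → c₀`;
this is as close to `𝒥 c₀` as we like for `s` near `1`.
-/

open Filter Topology

def offDiagNonneg (Γ : Type*) : Set (Γ → Γ → ℝ) := {c | ∀ σ σ', σ ≠ σ' → 0 ≤ c σ σ'}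

section OffDiagNonneg

variable {Γ : Type*}

lemma add_mem_offDiagNonneg {c d : Γ → Γ → ℝ} (hc : c ∈ offDiagNonneg Γ)
    (hd : d ∈ offDiagNonneg Γ) : c + d ∈ offDiagNonneg Γ :=
  fun σ σ' h => add_nonneg (hc σ σ' h) (hd σ σ' h)

lemma smul_mem_offDiagNonneg {a : ℝ} (ha : 0 ≤ a) {c : Γ → Γ → ℝ} (hc : c ∈ offDiagNonneg Γ) :
    a • c ∈ offDiagNonneg Γ :=
  fun σ σ' h => mul_nonneg ha (hc σ σ' h)

lemma convex_offDiagNonneg : Convex ℝ (offDiagNonneg Γ) :=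
  fun _ hc _ hd _ _ ha hb _ =>
    add_mem_offDiagNonneg (smul_mem_offDiagNonneg ha hc) (smul_mem_offDiagNonneg hb hd)

lemma eventually_smul_le [Finite Γ] {c₀ : Γ → Γ → ℝ} (hc₀ : c₀ ∈ offDiagNonneg Γ) {s : ℝ}
    (hs : s < 1) : ∀ᶠ d in 𝓝[offDiagNonneg Γ] c₀, ∀ σ σ', σ ≠ σ' → s * c₀ σ σ' ≤ d σ σ' := by
  refine eventually_all.mpr fun σ => eventually_all.mpr fun σ' => ?_
  rcases eq_or_ne σ σ' with rfl | hσ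
  · exact .of_forall fun _ h => absurd rfl h
  rcases (hc₀ σ σ' hσ).eq_or_lt with hzero | hpos
  · filter_upwards [self_mem_nhdsWithin] with d hd _
    simpa [← hzero] using hd σ σ' hσ
  · have hcont : Continuous fun d : Γ → Γ → ℝ => d σ σ' := by fun_prop
    filter_upwards [nhdsWithin_le_nhds ((hcont.tendsto c₀).eventually_const_lt
      (mul_lt_of_lt_one_left hpos hs))] with d hd _ using hd.le

end OffDiagNonneg

section Jfun

variable {Γ : Type*} [Fintype Γ] [DecidableEq Γ]

instance : Nonempty {z : Γ → ℝ // ∀ σ, 0 < z σ} := ⟨⟨1, fun _ => one_pos⟩⟩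

noncomputable def offDiagSum (c : Γ → Γ → ℝ) : ℝ :=
  ∑ p ∈ Finset.univ.filter (fun p : Γ × Γ => p.1 ≠ p.2), c p.1 p.2

lemma continuous_offDiagSum : Continuous (offDiagSum (Γ := Γ)) := by
  unfold offDiagSum; fun_prop

lemma Jhat_add (c d : Γ → Γ → ℝ) (z : Γ → ℝ) : Jhat (c + d) z = Jhat c z + Jhat d z := by
  simp only [Jhat, Pi.add_apply, add_mul, Finset.sum_add_distrib]

lemma Jhat_smul (a : ℝ) (c : Γ → Γ → ℝ) (z : Γ → ℝ) : Jhat (a • c) z = a * Jhat c z := by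
  simp only [Jhat, Pi.smul_apply, smul_eq_mul, Finset.mul_sum, mul_assoc]

lemma continuous_Jhat (z : Γ → ℝ) : Continuous fun c : Γ → Γ → ℝ => Jhat c z := by
  unfold Jhat; fun_prop

lemma Jhat_le_offDiagSum {c : Γ → Γ → ℝ} (hc : c ∈ offDiagNonneg Γ) {z : Γ → ℝ}
    (hz : ∀ σ, 0 < z σ) : Jhat c z ≤ offDiagSum c := by
  refine Finset.sum_le_sum fun p hp => ?_
  have hratio : 0 < z p.2 / z p.1 := div_pos (hz p.2) (hz p.1)
  have hcp : 0 ≤ c p.1 p.2 := hc p.1 p.2 (Finset.mem_filter.mp hp).2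
  nlinarith

lemma bddAbove_range_Jhat {c : Γ → Γ → ℝ} (hc : c ∈ offDiagNonneg Γ) :
    BddAbove (Set.range fun z : {z : Γ → ℝ // ∀ σ, 0 < z σ} => Jhat c z.1) :=
  ⟨offDiagSum c, by rintro _ ⟨z, rfl⟩; exact Jhat_le_offDiagSum hc z.2⟩

lemma Jhat_le_Jfun {c : Γ → Γ → ℝ} (hc : c ∈ offDiagNonneg Γ) {z : Γ → ℝ}
    (hz : ∀ σ, 0 < z σ) : Jhat c z ≤ Jfun c :=
  le_ciSup (bddAbove_range_Jhat hc) ⟨z, hz⟩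

lemma Jfun_nonneg {c : Γ → Γ → ℝ} (hc : c ∈ offDiagNonneg Γ) : 0 ≤ Jfun c := by
  simpa [Jhat] using Jhat_le_Jfun hc (z := 1) fun _ => one_pos

lemma Jfun_le_offDiagSum {c : Γ → Γ → ℝ} (hc : c ∈ offDiagNonneg Γ) :
    Jfun c ≤ offDiagSum c :=
  ciSup_le fun z => Jhat_le_offDiagSum hc z.2

lemma Jfun_add_le {c d : Γ → Γ → ℝ} (hc : c ∈ offDiagNonneg Γ) (hd : d ∈ offDiagNonneg Γ) :
    Jfun (c + d) ≤ Jfun c + Jfun d :=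
  ciSup_le fun z => (Jhat_add c d z).trans_le <|
    add_le_add (Jhat_le_Jfun hc z.2) (Jhat_le_Jfun hd z.2)

lemma Jfun_smul_le {a : ℝ} (ha : 0 ≤ a) {c : Γ → Γ → ℝ} (hc : c ∈ offDiagNonneg Γ) :
    Jfun (a • c) ≤ a * Jfun c :=
  ciSup_le fun z => (Jhat_smul a c z).trans_le <|
    mul_le_mul_of_nonneg_left (Jhat_le_Jfun hc z.2) ha

lemma convexOn_Jfun : ConvexOn ℝ (offDiagNonneg Γ) (Jfun (Γ := Γ)) :=
  ⟨convex_offDiagNonneg, fun _ hc _ hd _ _ ha hb _ =>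
    (Jfun_add_le (smul_mem_offDiagNonneg ha hc) (smul_mem_offDiagNonneg hb hd)).trans <|
      add_le_add (Jfun_smul_le ha hc) (Jfun_smul_le hb hd)⟩

lemma lowerSemicontinuousOn_Jfun : LowerSemicontinuousOn (Jfun (Γ := Γ)) (offDiagNonneg Γ) :=
  lowerSemicontinuousOn_ciSup (fun _ hc => bddAbove_range_Jhat hc)
    fun z => (continuous_Jhat z.1).lowerSemicontinuous.lowerSemicontinuousOn _

lemma Jfun_le_of_smul_le {c₀ d : Γ → Γ → ℝ} (hc₀ : c₀ ∈ offDiagNonneg Γ) {s : ℝ} (hs : 0 ≤ s)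
    (hle : ∀ σ σ', σ ≠ σ' → s * c₀ σ σ' ≤ d σ σ') :
    Jfun d ≤ s * Jfun c₀ + offDiagSum (d - s • c₀) := by
  have hrest : d - s • c₀ ∈ offDiagNonneg Γ := fun σ σ' h => sub_nonneg.mpr (hle σ σ' h)
  calc Jfun d = Jfun (s • c₀ + (d - s • c₀)) := by rw [add_sub_cancel]
    _ ≤ Jfun (s • c₀) + Jfun (d - s • c₀) :=
        Jfun_add_le (smul_mem_offDiagNonneg hs hc₀) hrest
    _ ≤ s * Jfun c₀ + offDiagSum (d - s • c₀) :=
        add_le_add (Jfun_smul_le hs hc₀) (Jfun_le_offDiagSum hrest)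

lemma upperSemicontinuousOn_Jfun : UpperSemicontinuousOn (Jfun (Γ := Γ)) (offDiagNonneg Γ) := by
  intro c₀ hc₀ y hy
  have hlim : Tendsto (fun s : ℝ => s * Jfun c₀ + offDiagSum (c₀ - s • c₀)) (𝓝[<] 1)
      (𝓝 (Jfun c₀)) := by
    have hcont : Continuous fun s : ℝ => s * Jfun c₀ + offDiagSum (c₀ - s • c₀) :=
      (continuous_id.mul continuous_const).add
        (continuous_offDiagSum.comp (continuous_const.sub (continuous_id.smul continuous_const)))
    convert (hcont.tendsto 1).mono_left nhdsWithin_le_nhds using 2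
    simp [offDiagSum]
  obtain ⟨s, hsy, hs0, hs1⟩ := ((hlim.eventually (gt_mem_nhds hy)).and
    (Ioo_mem_nhdsLT zero_lt_one : ∀ᶠ s in 𝓝[<] (1 : ℝ), s ∈ Set.Ioo 0 1)).exists
  have hbound : Continuous fun d => s * Jfun c₀ + offDiagSum (d - s • c₀) :=
    continuous_const.add (continuous_offDiagSum.comp (continuous_id.sub continuous_const))
  filter_upwards [eventually_smul_le hc₀ hs1, self_mem_nhdsWithin,
    nhdsWithin_le_nhds ((hbound.tendsto c₀).eventually (gt_mem_nhds hsy))] with d hle _ hd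
  exact (Jfun_le_of_smul_le hc₀ hs0.le hle).trans_lt hd

lemma continuousOn_Jfun : ContinuousOn (Jfun (Γ := Γ)) (offDiagNonneg Γ) :=
  continuousOn_iff_lower_upperSemicontinuousOn.mpr
    ⟨lowerSemicontinuousOn_Jfun, upperSemicontinuousOn_Jfun⟩

end Jfun

theorem stmt0_general {Γ : Type*} [Fintype Γ] [DecidableEq Γ] :
    ConvexOn ℝ {c : Γ → Γ → ℝ | ∀ σ σ' : Γ, σ ≠ σ' → 0 ≤ c σ σ'} (Jfun (Γ := Γ)) ∧
    ContinuousOn (Jfun (Γ := Γ)) {c : Γ → Γ → ℝ | ∀ σ σ' : Γ, σ ≠ σ' → 0 ≤ c σ σ'} ∧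
    ∀ c : Γ → Γ → ℝ, (∀ σ σ' : Γ, σ ≠ σ' → 0 ≤ c σ σ') →
      0 ≤ Jfun c ∧
      Jfun c ≤ ∑ p ∈ Finset.univ.filter (fun p : Γ × Γ => p.1 ≠ p.2), c p.1 p.2 :=
  ⟨convexOn_Jfun, continuousOn_Jfun, fun _ hc => ⟨Jfun_nonneg hc, Jfun_le_offDiagSum hc⟩⟩

/-- `𝒥` is convex and continuous on `[0,∞)^W`, and for every `c ∈ [0,∞)^W`
it satisfies `0 ≤ 𝒥(c) ≤ Σ_{(σ,σ')∈W} c(σ,σ')`. -/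
theorem stmt0 {Γ : Type*} [Fintype Γ] [DecidableEq Γ] (hcard : 1 < Fintype.card Γ) :
    ConvexOn ℝ {c : Γ → Γ → ℝ | ∀ σ σ' : Γ, σ ≠ σ' → 0 ≤ c σ σ'} (Jfun (Γ := Γ)) ∧
    ContinuousOn (Jfun (Γ := Γ)) {c : Γ → Γ → ℝ | ∀ σ σ' : Γ, σ ≠ σ' → 0 ≤ c σ σ'} ∧
    ∀ c : Γ → Γ → ℝ, (∀ σ σ' : Γ, σ ≠ σ' → 0 ≤ c σ σ') →
      0 ≤ Jfun c ∧
      Jfun c ≤ ∑ p ∈ Finset.univ.filter (fun p : Γ × Γ => p.1 ≠ p.2), c p.1 p.2 :=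
  stmt0_general
end

section
/- Let c ∈ [0,∞)^W be irreducible. Then the function Φ(z) = Σ_{(σ,σ')∈W} c(σ,σ') z_{σ'}/z_σ attains its infimum over (0,∞)^Γ at some point of the normalized set 𝒜 = {z ∈ (0,∞)^Γ : Σ_{σ∈Γ} z_σ² = 1}; equivalently, the supremum defining 𝒥(c) = sup_{z ∈ (0,∞)^Γ} Σ_{(σ,σ')∈W} c(σ,σ')(1 − z_{σ'}/z_σ) is attained at some z ∈ 𝒜. -/
/-!
`Φ` is invariant under scaling, so it suffices to minimise it over the unit sphere. A positive
`z` with `Φ(z) ≤ M` satisfies `c(a,b) z_b ≤ M z_a` for every `a ≠ b`, and these inequalities cut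
out a compact subset of the closed positive orthant of the sphere. Along a chain of positive
rates they propagate a vanishing coordinate, so by irreducibility the compact set lies in the
open orthant, where `Φ` is continuous and hence attains its minimum. Taking `M` to be the value
of `Φ` at the constant vector makes this set nonempty, and every positive `w` outside it
already has `Φ(w) > M`.
-/

open Finset

/-- `c ∈ [0,∞)^W` is irreducible: for any `σ ≠ σ'` there is a finite chain
`σ₁ = σ, …, σ_n = σ'` with `c(σ_i, σ_{i+1}) > 0` for all `i`. -/
def IrreducibleRates {Γ : Type*} (c : Γ → Γ → ℝ) : Prop :=
  ∀ σ σ' : Γ, σ ≠ σ' → Relation.TransGen (fun a b => 0 < c a b) σ σ'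

/-- `Φ(z) = Σ_{(σ,σ')∈W} c(σ,σ') z_{σ'}/z_σ`. -/
noncomputable def PhiFun {Γ : Type*} [Fintype Γ] [DecidableEq Γ]
    (c : Γ → Γ → ℝ) (z : Γ → ℝ) : ℝ :=
  ∑ p ∈ Finset.univ.filter (fun p : Γ × Γ => p.1 ≠ p.2), c p.1 p.2 * (z p.2 / z p.1)

section

variable {Γ : Type*}

theorem eq_zero_of_transGen_of_mul_le {c : Γ → Γ → ℝ} {M : ℝ} {z : Γ → ℝ}
    (hz : ∀ σ, 0 ≤ z σ) (hbound : ∀ a b, a ≠ b → c a b * z b ≤ M * z a) {x y : Γ}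
    (hxy : Relation.TransGen (fun a b => 0 < c a b) x y) (hx : z x = 0) : z y = 0 := by
  have step : ∀ a b, 0 < c a b → z a = 0 → z b = 0 := by
    intro a b hab ha
    obtain rfl | hne := eq_or_ne a b
    · exact ha
    have := hbound a b hne
    rw [ha, mul_zero] at this
    exact le_antisymm (nonpos_of_mul_nonpos_right this hab) (hz b)
  induction hxy with
  | single h => exact step _ _ h hx
  | tail _ h ih => exact step _ _ h ih

variable [Fintype Γ]

/-- Closed relaxation of the normalised sublevel set `{Φ ≤ M}`. -/
def phiSublevel (c : Γ → Γ → ℝ) (M : ℝ) : Set (Γ → ℝ) :=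
  {z | (∀ σ, 0 ≤ z σ) ∧ ∑ σ, z σ ^ 2 = 1 ∧ ∀ a b, a ≠ b → c a b * z b ≤ M * z a}

theorem pos_of_mem_phiSublevel {c : Γ → Γ → ℝ} (hirr : IrreducibleRates c) {M : ℝ}
    {z : Γ → ℝ} (hz : z ∈ phiSublevel c M) (σ : Γ) : 0 < z σ := by
  obtain ⟨hnonneg, hnorm, hbound⟩ := hz
  refine (hnonneg σ).lt_of_ne' fun hσ => ?_
  have hzero : ∀ τ, z τ = 0 := fun τ => by
    obtain rfl | hne := eq_or_ne σ τ
    · exact hσ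
    · exact eq_zero_of_transGen_of_mul_le hnonneg hbound (hirr σ τ hne) hσ
  simp [hzero] at hnorm

theorem isCompact_phiSublevel (c : Γ → Γ → ℝ) (M : ℝ) : IsCompact (phiSublevel c M) := by
  have hclosed : IsClosed (phiSublevel c M) := by
    simp only [phiSublevel, Set.ofPred_and, Set.ofPred_forall]
    exact (isClosed_iInter fun σ => isClosed_le continuous_const (continuous_apply σ)).inter <|
      (isClosed_eq (by fun_prop) continuous_const).inter <|
        isClosed_iInter fun a => isClosed_iInter fun b => isClosed_iInter fun _ =>
          isClosed_le (by fun_prop) (by fun_prop)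
  refine (isCompact_closedBall (0 : Γ → ℝ) 1).of_isClosed_subset hclosed fun z hz => ?_
  rw [mem_closedBall_zero_iff, pi_norm_le_iff_of_nonneg zero_le_one]
  intro σ
  rw [Real.norm_eq_abs, ← sq_le_one_iff_abs_le_one, ← hz.2.1]
  exact single_le_sum (f := fun τ => z τ ^ 2) (fun τ _ => sq_nonneg _) (mem_univ σ)

variable [DecidableEq Γ]

theorem Jhat_eq_sum_sub_PhiFun (c : Γ → Γ → ℝ) (z : Γ → ℝ) :
    Jhat c z = (∑ p ∈ univ.filter (fun p : Γ × Γ => p.1 ≠ p.2), c p.1 p.2) - PhiFun c z := by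
  simp [Jhat, PhiFun, mul_sub, sum_sub_distrib]

theorem PhiFun_div_const (c : Γ → Γ → ℝ) (w : Γ → ℝ) {r : ℝ} (hr : r ≠ 0) :
    PhiFun c (fun σ => w σ / r) = PhiFun c w := by
  refine sum_congr rfl fun p _ => ?_
  rw [div_div_div_cancel_right₀ hr]

theorem continuousOn_PhiFun (c : Γ → Γ → ℝ) : ContinuousOn (PhiFun c) {z | ∀ σ, z σ ≠ 0} :=
  continuousOn_finsetSum _ fun p _ => continuousOn_const.mul <|
    (continuous_apply p.2).continuousOn.div (continuous_apply p.1).continuousOn fun _ hz => hz p.1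

theorem mul_le_PhiFun_mul {c : Γ → Γ → ℝ} (hc : ∀ σ σ', σ ≠ σ' → 0 ≤ c σ σ') {z : Γ → ℝ}
    (hz : ∀ σ, 0 < z σ) {a b : Γ} (hab : a ≠ b) : c a b * z b ≤ PhiFun c z * z a := by
  have hterm : c a b * (z b / z a) ≤ PhiFun c z :=
    single_le_sum (f := fun p : Γ × Γ => c p.1 p.2 * (z p.2 / z p.1))
      (fun p hp => mul_nonneg (hc p.1 p.2 (mem_filter.1 hp).2) (div_nonneg (hz _).le (hz _).le))
      (mem_filter.2 ⟨mem_univ (a, b), hab⟩)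
  calc c a b * z b = c a b * (z b / z a) * z a := by field_simp [(hz a).ne']
    _ ≤ PhiFun c z * z a := mul_le_mul_of_nonneg_right hterm (hz a).le

theorem exists_sum_sq_eq_one_PhiFun_eq [Nonempty Γ] (c : Γ → Γ → ℝ) {w : Γ → ℝ}
    (hw : ∀ σ, 0 < w σ) :
    ∃ w' : Γ → ℝ, (∀ σ, 0 < w' σ) ∧ ∑ σ, w' σ ^ 2 = 1 ∧ PhiFun c w' = PhiFun c w := by
  have hsum : 0 < ∑ σ, w σ ^ 2 := sum_pos (fun σ _ => pow_pos (hw σ) 2) univ_nonempty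
  have hr : 0 < √(∑ σ, w σ ^ 2) := Real.sqrt_pos.2 hsum
  refine ⟨fun σ => w σ / √(∑ σ, w σ ^ 2), fun σ => div_pos (hw σ) hr, ?_,
    PhiFun_div_const c w hr.ne'⟩
  simp_rw [div_pow, ← sum_div, Real.sq_sqrt hsum.le, div_self hsum.ne']

theorem mem_phiSublevel {c : Γ → Γ → ℝ} (hc : ∀ σ σ', σ ≠ σ' → 0 ≤ c σ σ') {M : ℝ}
    {w : Γ → ℝ} (hw : ∀ σ, 0 < w σ) (hnorm : ∑ σ, w σ ^ 2 = 1) (hM : PhiFun c w ≤ M) :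
    w ∈ phiSublevel c M :=
  ⟨fun σ => (hw σ).le, hnorm, fun a _ hab =>
    (mul_le_PhiFun_mul hc hw hab).trans (mul_le_mul_of_nonneg_right hM (hw a).le)⟩

theorem exists_forall_PhiFun_le [Nonempty Γ] {c : Γ → Γ → ℝ}
    (hc : ∀ σ σ', σ ≠ σ' → 0 ≤ c σ σ') (hirr : IrreducibleRates c) :
    ∃ z : Γ → ℝ, (∀ σ, 0 < z σ) ∧ ∑ σ, z σ ^ 2 = 1 ∧
      ∀ w : Γ → ℝ, (∀ σ, 0 < w σ) → PhiFun c z ≤ PhiFun c w := by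
  obtain ⟨z₀, hz₀, hz₀norm, -⟩ := 
    exists_sum_sq_eq_one_PhiFun_eq c (w := fun _ => 1) fun _ => one_pos
  set K := phiSublevel c (PhiFun c z₀)
  have hz₀K : z₀ ∈ K := mem_phiSublevel hc hz₀ hz₀norm le_rfl
  have hcont : ContinuousOn (PhiFun c) K := (continuousOn_PhiFun c).mono fun z hz σ =>
    (pos_of_mem_phiSublevel hirr hz σ).ne'
  obtain ⟨z, hzK, hzmin⟩ := (isCompact_phiSublevel c _).exists_isMinOn ⟨z₀, hz₀K⟩ hcont
  refine ⟨z, pos_of_mem_phiSublevel hirr hzK, hzK.2.1, fun w hw => ?_⟩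
  obtain ⟨w', hw', hw'norm, hw'eq⟩ := exists_sum_sq_eq_one_PhiFun_eq c hw
  rcases le_or_gt (PhiFun c w) (PhiFun c z₀) with hle | hlt
  · exact hw'eq ▸ hzmin (mem_phiSublevel hc hw' hw'norm (hw'eq ▸ hle))
  · exact (hzmin hz₀K).trans hlt.le

end

/-- for irreducible `c ∈ [0,∞)^W`, `Φ` attains its infimum over `(0,∞)^Γ`
at some point of `𝒜 = {z ∈ (0,∞)^Γ : Σ z_σ² = 1}`; equivalently the supremum defining
`𝒥(c)` is attained at some `z ∈ 𝒜`. -/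
theorem stmt1 {Γ : Type*} [Fintype Γ] [DecidableEq Γ] (hcard : 1 < Fintype.card Γ)
    (c : Γ → Γ → ℝ) (hc : ∀ σ σ' : Γ, σ ≠ σ' → 0 ≤ c σ σ') (hirr : IrreducibleRates c) :
    ∃ z : Γ → ℝ, (∀ σ, 0 < z σ) ∧ (∑ σ, (z σ) ^ 2 = 1) ∧
      (∀ w : Γ → ℝ, (∀ σ, 0 < w σ) → PhiFun c z ≤ PhiFun c w) ∧
      (∀ w : Γ → ℝ, (∀ σ, 0 < w σ) → Jhat c w ≤ Jhat c z) := by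
  have : Nonempty Γ := Fintype.card_pos_iff.1 (Nat.zero_lt_of_lt hcard)
  obtain ⟨z, hz, hnorm, hmin⟩ := exists_forall_PhiFun_le hc hirr
  refine ⟨z, hz, hnorm, hmin, fun w hw => ?_⟩
  rw [Jhat_eq_sum_sub_PhiFun, Jhat_eq_sum_sub_PhiFun]
  linarith [hmin w hw]
end

section
/- Let c ∈ [0,∞)^W be irreducible. Then the system of equations Σ_{σ'≠σ} c(σ,σ') z_{σ'}/z_σ = Σ_{σ'≠σ} c(σ',σ) z_σ/z_{σ'} (for every σ ∈ Γ) has a unique solution z̃ in the normalized set 𝒜 = {z ∈ (0,∞)^Γ : Σ_σ z_σ² = 1}, and the set of maximum points over (0,∞)^Γ of the function z ↦ Σ_{(σ,σ')∈W} c(σ,σ')(1 − z_{σ'}/z_σ) is exactly the ray {t·z̃ : t > 0}. -/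
open Finset

/-- The stationarity system (frignotta):
`Σ_{σ'≠σ} c(σ,σ') z_{σ'}/z_σ = Σ_{σ'≠σ} c(σ',σ) z_σ/z_{σ'}` for every `σ`. -/
def StationarySystem {Γ : Type*} [Fintype Γ] [DecidableEq Γ]
    (c : Γ → Γ → ℝ) (z : Γ → ℝ) : Prop :=
  ∀ σ : Γ, ∑ σ' ∈ Finset.univ.filter (· ≠ σ), c σ σ' * (z σ' / z σ)
      = ∑ σ' ∈ Finset.univ.filter (· ≠ σ), c σ' σ * (z σ / z σ')

/-!
Maximizing `Jhat c` over the positive orthant means minimizing the scale-invariant function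
`ratioSum c z = Σ_W c(σ,σ') z_σ' / z_σ`, which is convex in `log z`; the stationarity system says
that its gradient vanishes. Concretely, if `z` is stationary and `w = z·e^x`, the linear term cancels
and `ratioSum c w - ratioSum c z = Σ_W c(σ,σ') (z_σ' / z_σ) (e^d - 1 - d)` with `d = x_σ' - x_σ`.
This is `≥ 0`, with equality only if `x` is constant along every positive rate, hence (irreducibility)
constant. A minimizer exists: on a sublevel set a positive rate `c(a,b)` bounds `z_b / z_a`, so chains
of positive rates keep the normalized points of the sublevel set uniformly away from the boundary of
the orthant, where compactness applies; its first-order conditions are the stationarity system.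
-/

open Real

theorem IrreducibleRates.apply_eq {Γ α : Type*} {c : Γ → Γ → ℝ} (hirr : IrreducibleRates c)
    {f : Γ → α} (hf : ∀ a b, a ≠ b → 0 < c a b → f a = f b) (a b : Γ) : f a = f b := by
  have hstep : ∀ a b, 0 < c a b → f a = f b := fun a b hpos => by
    by_cases hab : a = b
    · rw [hab]
    · exact hf a b hab hpos
  obtain rfl | hab := eq_or_ne a b
  · rfl
  have hchain := hirr a b hab
  clear hab
  induction hchain with
  | single h => exact hstep _ _ h
  | tail _ h ih => exact ih.trans (hstep _ _ h)

section RatioSum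

variable {Γ : Type*} [Fintype Γ] [DecidableEq Γ]

theorem sum_filter_ne_eq_sum_sum {M : Type*} [AddCommMonoid M] (f : Γ × Γ → M) :
    ∑ p ∈ univ.filter (fun p : Γ × Γ => p.1 ≠ p.2), f p
      = ∑ a, ∑ b ∈ univ.filter (· ≠ a), f (a, b) := by
  rw [sum_filter, Fintype.sum_prod_type]
  refine sum_congr rfl fun a _ => ?_
  rw [sum_filter]
  simp only [ne_comm]

theorem sum_filter_ne_eq_sum_sum_swap {M : Type*} [AddCommMonoid M] (f : Γ × Γ → M) :
    ∑ p ∈ univ.filter (fun p : Γ × Γ => p.1 ≠ p.2), f p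
      = ∑ b, ∑ a ∈ univ.filter (· ≠ b), f (a, b) := by
  rw [sum_filter_ne_eq_sum_sum]
  exact sum_comm' fun a b => by simp [ne_comm]

noncomputable def ratioSum (c : Γ → Γ → ℝ) (z : Γ → ℝ) : ℝ :=
  ∑ p ∈ univ.filter (fun p : Γ × Γ => p.1 ≠ p.2), c p.1 p.2 * (z p.2 / z p.1)

theorem Jhat_eq_sub_ratioSum (c : Γ → Γ → ℝ) (z : Γ → ℝ) :
    Jhat c z = ∑ p ∈ univ.filter (fun p : Γ × Γ => p.1 ≠ p.2), c p.1 p.2 - ratioSum c z := by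
  rw [Jhat, ratioSum, ← sum_sub_distrib]
  exact sum_congr rfl fun p _ => by ring

theorem Jhat_le_Jhat_iff (c : Γ → Γ → ℝ) (z w : Γ → ℝ) :
    Jhat c w ≤ Jhat c z ↔ ratioSum c z ≤ ratioSum c w := by
  simp only [Jhat_eq_sub_ratioSum, sub_le_sub_iff_left]

theorem ratioSum_mul_left (c : Γ → Γ → ℝ) (z : Γ → ℝ) {t : ℝ} (ht : t ≠ 0) :
    ratioSum c (fun σ => t * z σ) = ratioSum c z :=
  sum_congr rfl fun p _ => by rw [mul_div_mul_left _ _ ht]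

theorem single_le_ratioSum {c : Γ → Γ → ℝ} (hc : ∀ σ σ', σ ≠ σ' → 0 ≤ c σ σ')
    {w : Γ → ℝ} (hw : ∀ σ, 0 < w σ) {a b : Γ} (hab : a ≠ b) :
    c a b * (w b / w a) ≤ ratioSum c w :=
  single_le_sum (f := fun p : Γ × Γ => c p.1 p.2 * (w p.2 / w p.1)) (a := (a, b))
    (fun p hp => mul_nonneg (hc _ _ (mem_filter.mp hp).2) (div_pos (hw _) (hw _)).le)
    (by simp [hab])

end RatioSum

noncomputable def expGap (x : ℝ) : ℝ := exp x - 1 - x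

theorem expGap_nonneg (x : ℝ) : 0 ≤ expGap x := by
  linarith [add_one_le_exp x, show expGap x = exp x - 1 - x from rfl]

theorem expGap_eq_zero_iff {x : ℝ} : expGap x = 0 ↔ x = 0 := by
  refine ⟨fun h => by_contra fun hx => ?_, fun hx => by simp [expGap, hx]⟩
  linarith [add_one_lt_exp hx, show expGap x = exp x - 1 - x from rfl]

namespace StationarySystem

variable {Γ : Type*} [Fintype Γ] [DecidableEq Γ] {c : Γ → Γ → ℝ} {z : Γ → ℝ}

theorem sum_mul_sub_eq_zero (hst : StationarySystem c z) (L : Γ → ℝ) :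
    ∑ p ∈ univ.filter (fun p : Γ × Γ => p.1 ≠ p.2),
      c p.1 p.2 * (z p.2 / z p.1) * (L p.2 - L p.1) = 0 := by
  simp only [mul_sub, sum_sub_distrib]
  rw [sum_filter_ne_eq_sum_sum_swap (fun p => c p.1 p.2 * (z p.2 / z p.1) * L p.2),
    sum_filter_ne_eq_sum_sum (fun p => c p.1 p.2 * (z p.2 / z p.1) * L p.1), sub_eq_zero]
  refine sum_congr rfl fun a _ => ?_
  simp only [← sum_mul, hst a]

theorem ratioSum_sub_eq (hst : StationarySystem c z) (hz : ∀ σ, 0 < z σ) {w : Γ → ℝ}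
    (hw : ∀ σ, 0 < w σ) :
    ratioSum c w - ratioSum c z = ∑ p ∈ univ.filter (fun p : Γ × Γ => p.1 ≠ p.2),
      c p.1 p.2 * (z p.2 / z p.1) * expGap (log (w p.2 / z p.2) - log (w p.1 / z p.1)) := by
  simp only [expGap, mul_sub (c _ _ * _) (exp _ - 1), sum_sub_distrib]
  rw [hst.sum_mul_sub_eq_zero fun τ => log (w τ / z τ), sub_zero, ratioSum, ratioSum,
    ← sum_sub_distrib]
  refine sum_congr rfl fun p _ => ?_
  have := (hz p.1).ne'
  have := (hz p.2).ne'
  have := (hw p.1).ne'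
  rw [exp_sub, exp_log (div_pos (hw _) (hz _)), exp_log (div_pos (hw _) (hz _))]
  field_simp

theorem ratioSum_le (hc : ∀ σ σ', σ ≠ σ' → 0 ≤ c σ σ') (hst : StationarySystem c z)
    (hz : ∀ σ, 0 < z σ) {w : Γ → ℝ} (hw : ∀ σ, 0 < w σ) : ratioSum c z ≤ ratioSum c w := by
  rw [← sub_nonneg, hst.ratioSum_sub_eq hz hw]
  exact sum_nonneg fun p hp => mul_nonneg
    (mul_nonneg (hc _ _ (mem_filter.mp hp).2) (div_pos (hz _) (hz _)).le) (expGap_nonneg _)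

theorem exists_eq_mul_of_ratioSum_eq [Nonempty Γ] (hc : ∀ σ σ', σ ≠ σ' → 0 ≤ c σ σ')
    (hirr : IrreducibleRates c) (hst : StationarySystem c z) (hz : ∀ σ, 0 < z σ) {w : Γ → ℝ}
    (hw : ∀ σ, 0 < w σ) (heq : ratioSum c w = ratioSum c z) :
    ∃ t, 0 < t ∧ w = fun σ => t * z σ := by
  have hterms := (sum_eq_zero_iff_of_nonneg fun p hp => mul_nonneg
      (mul_nonneg (hc _ _ (mem_filter.mp hp).2) (div_pos (hz _) (hz _)).le)
      (expGap_nonneg _)).mp ((hst.ratioSum_sub_eq hz hw).symm.trans (sub_eq_zero.mpr heq))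
  have hratio : ∀ a b, a ≠ b → 0 < c a b → w a / z a = w b / z b := by
    intro a b hab hpos
    have hgap := (mul_eq_zero.mp (hterms (a, b) (by simp [hab]))).resolve_left
      (mul_pos hpos (div_pos (hz b) (hz a))).ne'
    exact log_injOn_pos (div_pos (hw a) (hz a)) (div_pos (hw b) (hz b))
      (sub_eq_zero.mp (expGap_eq_zero_iff.mp hgap)).symm
  obtain ⟨σ₀⟩ := ‹Nonempty Γ›
  refine ⟨w σ₀ / z σ₀, div_pos (hw σ₀) (hz σ₀), funext fun σ => ?_⟩
  rw [← hirr.apply_eq hratio σ σ₀, div_mul_cancel₀ _ (hz σ).ne']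

end StationarySystem

section Minimizer

variable {Γ : Type*} [Fintype Γ] [DecidableEq Γ] {c : Γ → Γ → ℝ} {z : Γ → ℝ}

theorem ratioSum_update_mul (hz : ∀ σ, 0 < z σ) (σ : Γ) {t : ℝ} (ht : t ≠ 0) :
    ratioSum c (Function.update z σ (t * z σ)) = ratioSum c z
      + (t⁻¹ - 1) * ∑ σ' ∈ univ.filter (· ≠ σ), c σ σ' * (z σ' / z σ)
      + (t - 1) * ∑ σ' ∈ univ.filter (· ≠ σ), c σ' σ * (z σ / z σ') := by
  -- an off-diagonal pair `(a, b)` meets `σ` in at most one coordinate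
  have hterm : ∀ p ∈ univ.filter (fun p : Γ × Γ => p.1 ≠ p.2),
      c p.1 p.2 * (Function.update z σ (t * z σ) p.2 / Function.update z σ (t * z σ) p.1)
        = c p.1 p.2 * (z p.2 / z p.1)
          + (if p.1 = σ then (t⁻¹ - 1) * (c p.1 p.2 * (z p.2 / z p.1)) else 0)
          + (if p.2 = σ then (t - 1) * (c p.1 p.2 * (z p.2 / z p.1)) else 0) := by
    rintro ⟨a, b⟩ hab
    have hab : a ≠ b := (mem_filter.mp hab).2
    have := (hz a).ne'
    have := (hz b).ne'
    by_cases ha : a = σ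
    · subst ha
      simp only [Function.update_self, Function.update_of_ne hab.symm, if_true, if_neg hab.symm,
        add_zero]
      field_simp
      ring
    by_cases hb : b = σ
    · subst hb
      simp only [Function.update_self, Function.update_of_ne hab, if_true, if_neg hab, add_zero]
      field_simp
      ring
    · simp only [Function.update_of_ne ha, Function.update_of_ne hb, if_neg ha, if_neg hb,
        add_zero]
  simp only [ratioSum]
  rw [sum_congr rfl hterm, sum_add_distrib, sum_add_distrib,
    sum_filter_ne_eq_sum_sum (fun p => if p.1 = σ then _ else 0),
    sum_filter_ne_eq_sum_sum_swap (fun p => if p.2 = σ then _ else 0)]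
  simp only [sum_ite_irrel, sum_const_zero, sum_ite_eq', mem_univ, if_true, mul_sum]

theorem StationarySystem.of_forall_ratioSum_le (hz : ∀ σ, 0 < z σ)
    (hmin : ∀ w : Γ → ℝ, (∀ σ, 0 < w σ) → ratioSum c z ≤ ratioSum c w) :
    StationarySystem c z := by
  intro σ
  set A := ∑ σ' ∈ univ.filter (· ≠ σ), c σ σ' * (z σ' / z σ)
  set B := ∑ σ' ∈ univ.filter (· ≠ σ), c σ' σ * (z σ / z σ')
  -- scaling `z σ` by `t` changes `ratioSum c z` by `(t⁻¹ - 1) * A + (t - 1) * B`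
  have hlocal : IsLocalMin (fun t : ℝ => (t⁻¹ - 1) * A + (t - 1) * B) 1 := by
    filter_upwards [Ioi_mem_nhds one_pos] with t ht
    have hw : ∀ τ, 0 < Function.update z σ (t * z σ) τ :=
      Function.forall_update_iff _ (p := fun _ x => 0 < x) |>.mpr
        ⟨mul_pos ht (hz σ), fun τ _ => hz τ⟩
    have := hmin _ hw
    rw [ratioSum_update_mul hz σ (ne_of_gt ht)] at this
    norm_num
    linarith
  have hderiv : HasDerivAt (fun t : ℝ => (t⁻¹ - 1) * A + (t - 1) * B) (-A + B) 1 := by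
    have hinv : HasDerivAt (fun t : ℝ => (t⁻¹ - 1) * A) (-A) 1 := by
      simpa using ((hasDerivAt_inv one_ne_zero).sub_const 1).mul_const A
    have hlin : HasDerivAt (fun t : ℝ => (t - 1) * B) B 1 := by
      simpa using ((hasDerivAt_id' (1 : ℝ)).sub_const 1).mul_const B
    exact hinv.add hlin
  linarith [hlocal.hasDerivAt_eq_zero hderiv]

end Minimizer

theorem exists_mul_bound_of_transGen {Γ : Type*} {r : Γ → Γ → Prop} {P : Set (Γ → ℝ)}
    (hP : ∀ w ∈ P, ∀ σ, 0 < w σ) (hr : ∀ a b, r a b → ∃ M, ∀ w ∈ P, w b ≤ M * w a)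
    {x y : Γ} (h : Relation.TransGen r x y) : ∃ M, ∀ w ∈ P, w y ≤ M * w x := by
  induction h with
  | single hxy => exact hr _ _ hxy
  | tail _ hbd ih =>
    obtain ⟨M₁, hM₁⟩ := ih
    obtain ⟨M₂, hM₂⟩ := hr _ _ hbd
    refine ⟨M₂ * M₁, fun w hw => (hM₂ w hw).trans ?_⟩
    have hM₂pos : 0 < M₂ := pos_of_mul_pos_left ((hP w hw _).trans_le (hM₂ w hw)) (hP w hw _).le
    rw [mul_assoc]
    exact mul_le_mul_of_nonneg_left (hM₁ w hw) hM₂pos.le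

section UnitSphere

variable {Γ : Type*} [Fintype Γ]

theorem le_one_of_sum_sq_eq_one {w : Γ → ℝ} (hw : ∀ σ, 0 ≤ w σ) (hsum : ∑ τ, w τ ^ 2 = 1)
    (σ : Γ) : w σ ≤ 1 :=
  (sq_le_one_iff₀ (hw σ)).mp (hsum ▸ single_le_sum (fun τ _ => sq_nonneg (w τ)) (mem_univ σ))

theorem inv_card_mul_sq_le {w : Γ → ℝ} (hw : ∀ σ, 0 < w σ) (hsum : ∑ τ, w τ ^ 2 = 1)
    {M : ℝ} (hM : 0 < M) {σ : Γ} (hσ : ∀ τ, w τ ≤ M * w σ) :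
    (Fintype.card Γ * M ^ 2)⁻¹ ≤ w σ := by
  have hcard : 0 < (Fintype.card Γ : ℝ) := Nat.cast_pos.mpr (Fintype.card_pos_iff.mpr ⟨σ⟩)
  have hsq : 1 ≤ Fintype.card Γ * M ^ 2 * w σ ^ 2 := calc
    1 = ∑ τ, w τ ^ 2 := hsum.symm
    _ ≤ ∑ _τ : Γ, (M * w σ) ^ 2 :=
      sum_le_sum fun τ _ => pow_le_pow_left₀ (hw τ).le (hσ τ) 2
    _ = Fintype.card Γ * M ^ 2 * w σ ^ 2 := by
      rw [sum_const, card_univ, nsmul_eq_mul]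
      ring
  have hσ1 : w σ ^ 2 ≤ w σ := by
    nlinarith [le_one_of_sum_sq_eq_one (fun τ => (hw τ).le) hsum σ, hw σ]
  refine (inv_le_iff_one_le_mul₀' (by positivity)).mpr ?_
  linarith [mul_le_mul_of_nonneg_left hσ1 (by positivity : (0 : ℝ) ≤ Fintype.card Γ * M ^ 2)]

noncomputable def normalizeL2 (w : Γ → ℝ) : Γ → ℝ := fun σ => (√(∑ τ, w τ ^ 2))⁻¹ * w σ

variable [Nonempty Γ] {w : Γ → ℝ}

theorem sum_sq_pos (hw : ∀ σ, 0 < w σ) : 0 < ∑ τ, w τ ^ 2 :=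
  sum_pos (fun τ _ => pow_pos (hw τ) 2) univ_nonempty

theorem normalizeL2_pos (hw : ∀ σ, 0 < w σ) (σ : Γ) : 0 < normalizeL2 w σ :=
  mul_pos (inv_pos.mpr (sqrt_pos.mpr (sum_sq_pos hw))) (hw σ)

theorem sum_sq_normalizeL2 (hw : ∀ σ, 0 < w σ) : ∑ σ, normalizeL2 w σ ^ 2 = 1 := by
  simp only [normalizeL2, mul_pow, ← mul_sum, inv_pow, sq_sqrt (sum_sq_pos hw).le]
  exact inv_mul_cancel₀ (sum_sq_pos hw).ne'

end UnitSphere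

section Existence

variable {Γ : Type*} [Fintype Γ] [DecidableEq Γ] {c : Γ → Γ → ℝ}

theorem ratioSum_normalizeL2 [Nonempty Γ] {w : Γ → ℝ} (hw : ∀ σ, 0 < w σ) :
    ratioSum c (normalizeL2 w) = ratioSum c w :=
  ratioSum_mul_left c w (inv_pos.mpr (sqrt_pos.mpr (sum_sq_pos hw))).ne'

theorem exists_mul_bound_of_ratioSum_le (hc : ∀ σ σ', σ ≠ σ' → 0 ≤ c σ σ')
    (hirr : IrreducibleRates c) (C : ℝ) :
    ∃ M, 0 < M ∧ ∀ x y (w : Γ → ℝ), (∀ σ, 0 < w σ) → ratioSum c w ≤ C → w y ≤ M * w x := by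
  set P : Set (Γ → ℝ) := {w | (∀ σ, 0 < w σ) ∧ ratioSum c w ≤ C}
  have hedge : ∀ a b, 0 < c a b → ∃ M, ∀ w ∈ P, w b ≤ M * w a := by
    intro a b hpos
    obtain rfl | hab := eq_or_ne a b
    · exact ⟨1, fun w _ => (one_mul _).ge⟩
    refine ⟨C / c a b, fun w hw => ?_⟩
    have h := (single_le_ratioSum hc hw.1 hab).trans hw.2
    rw [mul_div_assoc', div_le_iff₀ (hw.1 a)] at h
    rw [div_mul_eq_mul_div, le_div_iff₀ hpos]
    linarith
  have hpair : ∀ x y, ∃ M, ∀ w ∈ P, w y ≤ M * w x := by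
    intro x y
    obtain rfl | hxy := eq_or_ne x y
    · exact ⟨1, fun w _ => (one_mul _).ge⟩
    exact exists_mul_bound_of_transGen (fun w hw => hw.1) hedge (hirr x y hxy)
  choose M hM using hpair
  obtain ⟨M₀, hM₀⟩ := Finite.exists_le fun p : Γ × Γ => M p.1 p.2
  refine ⟨max M₀ 1, by positivity, fun x y w hw hC => (hM x y w ⟨hw, hC⟩).trans ?_⟩
  exact mul_le_mul_of_nonneg_right ((hM₀ (x, y)).trans (le_max_left _ _)) (hw x).le

theorem exists_forall_ratioSum_le [Nonempty Γ] (hc : ∀ σ σ', σ ≠ σ' → 0 ≤ c σ σ')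
    (hirr : IrreducibleRates c) :
    ∃ z : Γ → ℝ, (∀ σ, 0 < z σ) ∧ ∑ σ, z σ ^ 2 = 1 ∧
      ∀ w : Γ → ℝ, (∀ σ, 0 < w σ) → ratioSum c z ≤ ratioSum c w := by
  set z₀ : Γ → ℝ := normalizeL2 fun _ => 1
  have hz₀ : ∀ σ, 0 < z₀ σ := normalizeL2_pos fun _ => one_pos
  obtain ⟨M, hM, hbound⟩ := exists_mul_bound_of_ratioSum_le hc hirr (ratioSum c z₀)
  set δ : ℝ := (Fintype.card Γ * M ^ 2)⁻¹
  have hδ : 0 < δ := by have := Fintype.card_pos (α := Γ); positivity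
  set K : Set (Γ → ℝ) := Set.univ.pi (fun _ => Set.Icc δ 1) ∩ {w | ∑ σ, w σ ^ 2 = 1}
  have hsublevel : ∀ w : Γ → ℝ, (∀ σ, 0 < w σ) → ∑ σ, w σ ^ 2 = 1 →
      ratioSum c w ≤ ratioSum c z₀ → w ∈ K := fun w hw hsum hle =>
    ⟨fun σ _ => ⟨inv_card_mul_sq_le hw hsum hM fun τ => hbound σ τ w hw hle,
      le_one_of_sum_sq_eq_one (fun τ => (hw τ).le) hsum σ⟩, hsum⟩
  have hz₀K : z₀ ∈ K := hsublevel z₀ hz₀ (sum_sq_normalizeL2 fun _ => one_pos) le_rfl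
  have hKpos : ∀ w ∈ K, ∀ σ, 0 < w σ := fun w hw σ => hδ.trans_le (hw.1 σ trivial).1
  have hK : IsCompact K := (isCompact_univ_pi fun _ => isCompact_Icc).inter_right
    (isClosed_eq (by fun_prop) continuous_const)
  have hcont : ContinuousOn (ratioSum c) K :=
    continuousOn_finsetSum _ fun p _ => continuousOn_const.mul
      ((continuous_apply p.2).continuousOn.div (continuous_apply p.1).continuousOn
        fun w hw => (hKpos w hw p.1).ne')
  obtain ⟨z, hzK, hzmin⟩ := hK.exists_isMinOn ⟨z₀, hz₀K⟩ hcont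
  refine ⟨z, hKpos z hzK, hzK.2, fun w hw => ?_⟩
  rw [← ratioSum_normalizeL2 (c := c) hw]
  by_cases hle : ratioSum c (normalizeL2 w) ≤ ratioSum c z₀
  · exact hzmin (hsublevel _ (normalizeL2_pos hw) (sum_sq_normalizeL2 hw) hle)
  · exact (hzmin hz₀K).trans (not_le.mp hle).le

end Existence

theorem StationarySystem.forall_ratioSum_le_iff {Γ : Type*} [Fintype Γ] [DecidableEq Γ]
    [Nonempty Γ] {c : Γ → Γ → ℝ} {z : Γ → ℝ} (hc : ∀ σ σ', σ ≠ σ' → 0 ≤ c σ σ')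
    (hirr : IrreducibleRates c) (hst : StationarySystem c z) (hz : ∀ σ, 0 < z σ) {w : Γ → ℝ}
    (hw : ∀ σ, 0 < w σ) :
    (∀ v : Γ → ℝ, (∀ σ, 0 < v σ) → ratioSum c w ≤ ratioSum c v) ↔
      ∃ t, 0 < t ∧ w = fun σ => t * z σ := by
  constructor
  · intro hmin
    exact hst.exists_eq_mul_of_ratioSum_eq hc hirr hz hw
      (le_antisymm (hmin z hz) (hst.ratioSum_le hc hz hw))
  · rintro ⟨t, ht, rfl⟩ v hv
    rw [ratioSum_mul_left c z ht.ne']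
    exact hst.ratioSum_le hc hz hv

/-- for irreducible `c`, the stationarity system has a unique solution `z̃` in
`𝒜 = {z ∈ (0,∞)^Γ : Σ z_σ² = 1}`, and the set of maximum points over `(0,∞)^Γ` of
`z ↦ Ĵ(c,z)` is exactly the ray `{t·z̃ : t > 0}`. -/
theorem stmt2 {Γ : Type*} [Fintype Γ] [DecidableEq Γ] (hcard : 1 < Fintype.card Γ)
    (c : Γ → Γ → ℝ) (hc : ∀ σ σ' : Γ, σ ≠ σ' → 0 ≤ c σ σ') (hirr : IrreducibleRates c) :
    ∃ ztilde : Γ → ℝ,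
      ((∀ σ, 0 < ztilde σ) ∧ (∑ σ, (ztilde σ) ^ 2 = 1) ∧ StationarySystem c ztilde) ∧
      (∀ z : Γ → ℝ, (∀ σ, 0 < z σ) → (∑ σ, (z σ) ^ 2 = 1) → StationarySystem c z →
        z = ztilde) ∧
      (∀ z : Γ → ℝ, (∀ σ, 0 < z σ) →
        ((∀ w : Γ → ℝ, (∀ σ, 0 < w σ) → Jhat c w ≤ Jhat c z) ↔
          ∃ t : ℝ, 0 < t ∧ z = fun σ => t * ztilde σ)) := by
  have : Nonempty Γ := Fintype.card_pos_iff.mp (by omega)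
  obtain ⟨zt, hzt, hztsum, hztmin⟩ := exists_forall_ratioSum_le hc hirr
  have hst : StationarySystem c zt := .of_forall_ratioSum_le hzt hztmin
  refine ⟨zt, ⟨hzt, hztsum, hst⟩, fun z hz hzsum hzst => ?_, fun z hz => ?_⟩
  · obtain ⟨t, ht, rfl⟩ := (hst.forall_ratioSum_le_iff hc hirr hzt hz).mp
      fun v hv => hzst.ratioSum_le hc hz hv
    have ht1 : t ^ 2 = 1 := by
      simpa only [mul_pow, ← mul_sum, hztsum, mul_one] using hzsum
    simp [(pow_eq_one_iff_of_nonneg ht.le two_ne_zero).mp ht1]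
  · simp only [Jhat_le_Jhat_iff]
    exact hst.forall_ratioSum_le_iff hc hirr hzt hz
end

section
/- Let 𝒮 ⊂ [0,∞)^W be the set of irreducible elements, and for c ∈ 𝒮 let z̃(c) denote the unique solution in 𝒜 = {z ∈ (0,∞)^Γ : Σ_σ z_σ² = 1} of the system Σ_{σ'≠σ} c(σ,σ') z_{σ'}/z_σ = Σ_{σ'≠σ} c(σ',σ) z_σ/z_{σ'} (σ ∈ Γ). Then z̃ : 𝒮 → 𝒜 is C¹ in the sense that for every c ∈ 𝒮 there exist an open neighborhood U of c in ℝ^W and a continuously differentiable map g : U → ℝ^Γ such that g(c') = z̃(c') for every c' ∈ U ∩ 𝒮. -/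
/-!
Write `z = exp ∘ x`, so that positivity is automatic, and replace the balance equation at one
state `σ₀` by the normalization `∑ z² = 1`; nothing is lost, because the net fluxes out of all
states always sum to zero. This gives a smooth map `F(c, x)` whose zeros with `c ∈ 𝒮` are exactly
the solutions. Its partial derivative in `x` is injective at a solution: the linearized balance
equations say that `y` is harmonic for the weights `c σ σ' z σ' / z σ + c σ' σ z σ / z σ'`, which
are irreducible, so `y` is constant by the maximum principle, and the linearized normalization
forces the constant to vanish. The implicit function theorem gives a `C¹` zero `x(c')` of `F`
near `c`, and uniqueness of solutions identifies `exp ∘ x(c')` with `z̃(c')`.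
-/

open Finset

open Real Filter Topology

theorem ContinuousLinearMap.isInvertible_of_injective {𝕜 E : Type*} [NontriviallyNormedField 𝕜]
    [CompleteSpace 𝕜] [NormedAddCommGroup E] [NormedSpace 𝕜 E] [FiniteDimensional 𝕜 E]
    {f : E →L[𝕜] E} (hf : Function.Injective f) : f.IsInvertible :=
  ⟨(LinearEquiv.ofInjectiveEndo f.toLinearMap hf).toContinuousLinearEquiv, rfl⟩

theorem hasLineDerivAt_id {𝕜 E : Type*} [NontriviallyNormedField 𝕜] [NormedAddCommGroup E]
    [NormedSpace 𝕜 E] (x v : E) : HasLineDerivAt 𝕜 id v x v := by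
  unfold HasLineDerivAt
  simpa using ((hasDerivAt_id (0 : 𝕜)).smul_const v).const_add x

theorem IrreducibleRates.mono {Γ : Type*} {c d : Γ → Γ → ℝ} (hc : IrreducibleRates c)
    (h : ∀ a b, 0 < c a b → 0 < d a b) : IrreducibleRates d :=
  fun σ σ' hne => Relation.TransGen.mono h _ _ (hc σ σ' hne)

section NetFlux

variable {Γ : Type*} [Fintype Γ] [DecidableEq Γ]

noncomputable def netFlux (f : Γ → Γ → ℝ) (σ : Γ) : ℝ :=
  ∑ σ' ∈ univ.filter (· ≠ σ), (f σ σ' - f σ' σ)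

theorem sum_netFlux (f : Γ → Γ → ℝ) : ∑ σ, netFlux f σ = 0 := by
  have h : ∀ σ, netFlux f σ = ∑ σ', (f σ σ' - f σ' σ) := fun σ =>
    sum_filter_of_ne fun σ' _ hne => by rintro rfl; simp at hne
  simp only [h, sum_sub_distrib]
  rw [sum_comm, sub_self]

theorem netFlux_eq_zero_of_ne {f : Γ → Γ → ℝ} (σ₀ : Γ) (h : ∀ σ ≠ σ₀, netFlux f σ = 0)
    (σ : Γ) : netFlux f σ = 0 := by
  rcases eq_or_ne σ σ₀ with rfl | hσ
  · simpa [← add_sum_erase _ _ (mem_univ σ), sum_eq_zero fun τ hτ => h τ (ne_of_mem_erase hτ)]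
      using sum_netFlux f
  · exact h σ hσ

theorem stationarySystem_iff_netFlux {c : Γ → Γ → ℝ} {z : Γ → ℝ} :
    StationarySystem c z ↔ ∀ σ, netFlux (fun a b => c a b * (z b / z a)) σ = 0 := by
  simp only [StationarySystem, netFlux, sum_sub_distrib, sub_eq_zero]

/-- Discrete maximum principle: at a maximum of `y` every neighbour must share the maximal value. -/
theorem IrreducibleRates.eq_of_sum_mul_sub_eq_zero {A : Γ → Γ → ℝ}
    (hA : ∀ σ σ', σ ≠ σ' → 0 ≤ A σ σ') (hirr : IrreducibleRates A) {y : Γ → ℝ}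
    (hy : ∀ σ, ∑ σ' ∈ univ.filter (· ≠ σ), A σ σ' * (y σ' - y σ) = 0) (σ σ' : Γ) :
    y σ = y σ' := by
  obtain ⟨τ, -, hτ⟩ := exists_max_image univ y ⟨σ, mem_univ σ⟩
  have step : ∀ a b, y a = y τ → 0 < A a b → y b = y τ := by
    intro a b ha hab
    rcases eq_or_ne b a with rfl | hba
    · exact ha
    have hle : ∀ σ' ∈ univ.filter (· ≠ a), A a σ' * (y σ' - y a) ≤ 0 := fun σ' hσ' =>
      mul_nonpos_of_nonneg_of_nonpos (hA a σ' (by simpa [eq_comm] using hσ'))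
        (by linarith [hτ σ' (mem_univ σ')])
    have := (sum_eq_zero_iff_of_nonpos hle).1 (hy a) b (by simpa using hba)
    rw [mul_eq_zero, sub_eq_zero] at this
    exact this.resolve_left hab.ne' ▸ ha
  have reach : ∀ σ, Relation.TransGen (fun a b => 0 < A a b) τ σ → y σ = y τ := by
    intro σ h
    induction h with
    | single h => exact step τ _ rfl h
    | tail _ h ih => exact step _ _ ih h
  have hall : ∀ σ, y σ = y τ := fun σ =>
    (eq_or_ne τ σ).elim (fun h => h ▸ rfl) fun hne => reach σ (hirr τ σ hne)
  rw [hall σ, hall σ']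

theorem IrreducibleRates.eq_of_netFlux_mul_sub_eq_zero {w : Γ → Γ → ℝ}
    (hw : ∀ σ σ', σ ≠ σ' → 0 ≤ w σ σ') (hirr : IrreducibleRates w) {y : Γ → ℝ}
    (hy : ∀ σ, netFlux (fun a b => w a b * (y b - y a)) σ = 0) (σ σ' : Γ) : y σ = y σ' := by
  refine IrreducibleRates.eq_of_sum_mul_sub_eq_zero (A := fun a b => w a b + w b a)
    (fun a b hab => add_nonneg (hw a b hab) (hw b a hab.symm)) (hirr.mono fun a b hab => ?_)
    (fun σ => (sum_congr rfl fun σ' _ => by ring).trans (hy σ)) σ σ'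
  rcases eq_or_ne a b with rfl | hne
  · positivity
  · linarith [hw b a hne.symm]

end NetFlux

section StationaryResidual

variable {Γ : Type*} [Fintype Γ] [DecidableEq Γ]

noncomputable def expFlux (c : Γ → Γ → ℝ) (x : Γ → ℝ) (a b : Γ) : ℝ :=
  c a b * exp (x b - x a)

noncomputable def stationaryResidual (σ₀ : Γ) (p : (Γ → Γ → ℝ) × (Γ → ℝ)) (σ : Γ) : ℝ :=
  if σ = σ₀ then ∑ τ, exp (p.2 τ) ^ 2 - 1 else netFlux (expFlux p.1 p.2) σ

theorem stationaryResidual_eq_zero_iff {σ₀ : Γ} {c : Γ → Γ → ℝ} {x : Γ → ℝ} :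
    stationaryResidual σ₀ (c, x) = 0 ↔
      ∑ τ, exp (x τ) ^ 2 = 1 ∧ StationarySystem c (fun τ => exp (x τ)) := by
  have hflux : (fun a b => c a b * (exp (x b) / exp (x a))) = expFlux c x := by
    ext a b; rw [expFlux, exp_sub]
  rw [stationarySystem_iff_netFlux, hflux, funext_iff]
  simp only [stationaryResidual, Pi.zero_apply]
  constructor
  · intro h
    refine ⟨by simpa [sub_eq_zero] using h σ₀, netFlux_eq_zero_of_ne σ₀ fun σ hσ => ?_⟩
    simpa [hσ] using h σ
  · rintro ⟨hnorm, hbal⟩ σ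
    split_ifs
    · rw [hnorm, sub_self]
    · exact hbal σ

theorem contDiff_stationaryResidual {n : WithTop ℕ∞} (σ₀ : Γ) :
    ContDiff ℝ n (stationaryResidual σ₀) := by
  refine contDiff_pi.2 fun σ => ?_
  unfold stationaryResidual netFlux expFlux
  split_ifs <;> fun_prop

theorem hasLineDerivAt_netFlux_expFlux (c : Γ → Γ → ℝ) (x y : Γ → ℝ) (σ : Γ) :
    HasLineDerivAt ℝ (fun x => netFlux (expFlux c x) σ)
      (netFlux (fun a b => expFlux c x a b * (y b - y a)) σ) x y := by
  have hterm : ∀ a b, HasLineDerivAt ℝ (fun x => expFlux c x a b)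
      (expFlux c x a b * (y b - y a)) x y := by
    intro a b
    unfold HasLineDerivAt
    have hline := hasLineDerivAt_id (𝕜 := ℝ) x y
    have hlin := (hasDerivAt_pi.1 hline b).sub (hasDerivAt_pi.1 hline a)
    simpa [expFlux, mul_assoc] using hlin.exp.const_mul (c a b)
  exact HasDerivAt.fun_sum fun σ' _ => (hterm σ σ').sub (hterm σ' σ)

theorem hasLineDerivAt_stationaryResidual (σ₀ : Γ) (c : Γ → Γ → ℝ) (x y : Γ → ℝ) :
    HasLineDerivAt ℝ (fun x => stationaryResidual σ₀ (c, x))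
      (fun σ => if σ = σ₀ then ∑ τ, 2 * exp (x τ) ^ 2 * y τ
        else netFlux (fun a b => expFlux c x a b * (y b - y a)) σ) x y := by
  refine hasDerivAt_pi.2 fun σ => ?_
  simp only [stationaryResidual]
  split_ifs
  · have hline := hasLineDerivAt_id (𝕜 := ℝ) x y
    have hsq := HasDerivAt.fun_sum fun τ (_ : τ ∈ univ) =>
      (hasDerivAt_pi.1 hline τ).exp.fun_pow 2
    refine (hsq.sub_const 1).congr_deriv (sum_congr rfl fun τ _ => ?_)
    simp only [Nat.cast_ofNat, zero_smul, add_zero, id_eq, Nat.add_one_sub_one, pow_one]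
    ring
  · exact hasLineDerivAt_netFlux_expFlux c x y σ

theorem injective_fderiv_stationaryResidual_comp_inr {σ₀ : Γ} {c : Γ → Γ → ℝ} (x : Γ → ℝ)
    (hc : ∀ σ σ', σ ≠ σ' → 0 ≤ c σ σ') (hirr : IrreducibleRates c) :
    Function.Injective
      (fderiv ℝ (stationaryResidual σ₀) (c, x) ∘L .inr ℝ (Γ → Γ → ℝ) (Γ → ℝ)) := by
  rw [injective_iff_map_eq_zero]
  intro y hy
  have hpartial := (((contDiff_stationaryResidual (n := 1) σ₀).differentiable one_ne_zero)
    (c, x)).hasFDerivAt.comp x (hasFDerivAt_prodMk_right c x)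
  have hzero := (hasLineDerivAt_stationaryResidual σ₀ c x y).unique (hpartial.hasLineDerivAt y)
  rw [hy] at hzero
  have hnorm : ∑ τ, 2 * exp (x τ) ^ 2 * y τ = 0 := by simpa using congrFun hzero σ₀
  have hirr' : IrreducibleRates (expFlux c x) := hirr.mono fun a b hab => mul_pos hab (exp_pos _)
  have hflux : ∀ σ, netFlux (fun a b => expFlux c x a b * (y b - y a)) σ = 0 :=
    netFlux_eq_zero_of_ne σ₀ fun σ hσ => by simpa [hσ] using congrFun hzero σ
  have hconst := hirr'.eq_of_netFlux_mul_sub_eq_zero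
    (fun a b hab => mul_nonneg (hc a b hab) (exp_pos _).le) hflux
  have hk : (∑ τ, 2 * exp (x τ) ^ 2) * y σ₀ = 0 := by
    rw [sum_mul, ← hnorm]
    exact sum_congr rfl fun τ _ => by rw [hconst τ σ₀]
  have hpos : 0 < ∑ τ, 2 * exp (x τ) ^ 2 := sum_pos (fun τ _ => by positivity) ⟨σ₀, mem_univ _⟩
  funext σ
  rw [hconst σ σ₀]
  exact (mul_eq_zero.1 hk).resolve_left hpos.ne'

end StationaryResidual

theorem stmt4_general {Γ : Type*} [Fintype Γ] [DecidableEq Γ]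
    (ztilde : (Γ → Γ → ℝ) → (Γ → ℝ))
    (hzt : ∀ c : Γ → Γ → ℝ, (∀ σ σ' : Γ, σ ≠ σ' → 0 ≤ c σ σ') → IrreducibleRates c →
      ((∀ σ, 0 < ztilde c σ) ∧ (∑ σ, (ztilde c σ) ^ 2 = 1) ∧ StationarySystem c (ztilde c)) ∧
      (∀ z : Γ → ℝ, (∀ σ, 0 < z σ) → (∑ σ, (z σ) ^ 2 = 1) → StationarySystem c z →
        z = ztilde c)) :
    ∀ c : Γ → Γ → ℝ, (∀ σ σ' : Γ, σ ≠ σ' → 0 ≤ c σ σ') → IrreducibleRates c →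
      ∃ U : Set (Γ → Γ → ℝ), IsOpen U ∧ c ∈ U ∧
        ∃ g : (Γ → Γ → ℝ) → (Γ → ℝ), ContDiffOn ℝ 1 g U ∧
          ∀ c' ∈ U, (∀ σ σ' : Γ, σ ≠ σ' → 0 ≤ c' σ σ') → IrreducibleRates c' →
            g c' = ztilde c' := by
  intro c hc hirr
  obtain ⟨⟨hpos, hnorm, hstat⟩, -⟩ := hzt c hc hirr
  obtain ⟨σ₀, -, -⟩ := exists_ne_zero_of_sum_ne_zero (hnorm.trans_ne one_ne_zero)
  set x : Γ → ℝ := fun σ => log (ztilde c σ)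
  have hexp : ∀ σ, exp (x σ) = ztilde c σ := fun σ => exp_log (hpos σ)
  have hF : ContDiffAt ℝ 1 (stationaryResidual σ₀) (c, x) :=
    (contDiff_stationaryResidual σ₀).contDiffAt
  have hinv := ContinuousLinearMap.isInvertible_of_injective
    (injective_fderiv_stationaryResidual_comp_inr (σ₀ := σ₀) x hc hirr)
  set ψ := hF.implicitFunction one_ne_zero hinv
  have hsol : ∀ᶠ c' in 𝓝 c, stationaryResidual σ₀ (c', ψ c') = 0 := by
    filter_upwards [hF.eventually_apply_implicitFunction one_ne_zero hinv] with c' h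
    rw [h, stationaryResidual_eq_zero_iff]
    simp only [hexp]
    exact ⟨hnorm, hstat⟩
  have hg : ContDiffAt ℝ 1 (fun c' σ => exp (ψ c' σ)) c := contDiffAt_pi.2 fun σ =>
    (contDiffAt_pi.1 (hF.contDiffAt_implicitFunction one_ne_zero hinv) σ).exp
  obtain ⟨V, hV, hgV⟩ := hg.contDiffOn le_rfl (by simp)
  obtain ⟨U, hUV, hU, hcU⟩ := mem_nhds_iff.1 (inter_mem hV hsol)
  refine ⟨U, hU, hcU, _, hgV.mono fun c' h => (hUV h).1, fun c' hc'U hc' hirr' => ?_⟩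
  obtain ⟨hnorm', hstat'⟩ := stationaryResidual_eq_zero_iff.1 (hUV hc'U).2
  exact (hzt c' hc' hirr').2 _ (fun σ => exp_pos _) hnorm' hstat'

/-- let `z̃(c)` be, for each irreducible nonnegative `c`, the unique normalized
positive solution of the stationarity system. Then `z̃ : 𝒮 → 𝒜` is `C¹`: around each `c ∈ 𝒮`
there are an open neighborhood `U ⊆ ℝ^W` and a continuously differentiable map
`g : U → ℝ^Γ` which coincides with `z̃` on `U ∩ 𝒮`. -/
theorem stmt4 {Γ : Type*} [Fintype Γ] [DecidableEq Γ] (hcard : 1 < Fintype.card Γ)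
    (ztilde : (Γ → Γ → ℝ) → (Γ → ℝ))
    (hzt : ∀ c : Γ → Γ → ℝ, (∀ σ σ' : Γ, σ ≠ σ' → 0 ≤ c σ σ') → IrreducibleRates c →
      ((∀ σ, 0 < ztilde c σ) ∧ (∑ σ, (ztilde c σ) ^ 2 = 1) ∧ StationarySystem c (ztilde c)) ∧
      (∀ z : Γ → ℝ, (∀ σ, 0 < z σ) → (∑ σ, (z σ) ^ 2 = 1) → StationarySystem c z →
        z = ztilde c)) :
    ∀ c : Γ → Γ → ℝ, (∀ σ σ' : Γ, σ ≠ σ' → 0 ≤ c σ σ') → IrreducibleRates c →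
      ∃ U : Set (Γ → Γ → ℝ), IsOpen U ∧ c ∈ U ∧
        ∃ g : (Γ → Γ → ℝ) → (Γ → ℝ), ContDiffOn ℝ 1 g U ∧
          ∀ c' ∈ U, (∀ σ σ' : Γ, σ ≠ σ' → 0 ≤ c' σ σ') → IrreducibleRates c' →
            g c' = ztilde c' :=
  stmt4_general ztilde hzt
end

section
/- Let r : W → [0,∞) be irreducible jump rates on the finite set Γ, let μ be a strictly positive probability measure on Γ satisfying the detailed balance (reversibility) condition μ(σ) r(σ,σ') = μ(σ') r(σ',σ) for all (σ,σ') ∈ W, and let π be a strictly positive measure on Γ. Then the supremum j(π,r) := sup_{z ∈ (0,∞)^Γ} Σ_{(σ,σ')∈W} π(σ) r(σ,σ')(1 − z_{σ'}/z_σ) is attained at z with z_σ proportional to √(π(σ)/μ(σ)), and j(π,r) = Σ_{(σ,σ')∈W} π(σ) r(σ,σ') (1 − √( π(σ') μ(σ) / (π(σ) μ(σ')) )). -/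
open Finset

/-! Split `Ĵ(c,z) = ∑ c(σ,σ') - ∑ c(σ,σ') z_{σ'}/z_σ` and pair each edge with its reverse:
by AM-GM, `c(σ,σ') z_{σ'}/z_σ + c(σ',σ) z_σ/z_{σ'} ≥ 2 √(c(σ,σ') c(σ',σ))`, so for every
positive `z` we get `Ĵ(c,z) ≤ ∑ (c(σ,σ') - √(c(σ,σ') c(σ',σ)))`, with equality as soon as the
tilted rates `c(σ,σ') z_{σ'}/z_σ` are symmetric. For `c = π r` with `r` reversible with respect
to `μ`, this symmetry holds for `z = √(π/μ)`. -/

section Jhat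

variable {Γ : Type*} [Fintype Γ] [DecidableEq Γ]

theorem sum_offDiag_swap {M : Type*} [AddCommMonoid M] (f : Γ × Γ → M) :
    ∑ p ∈ univ.filter (fun p : Γ × Γ => p.1 ≠ p.2), f p.swap
      = ∑ p ∈ univ.filter (fun p : Γ × Γ => p.1 ≠ p.2), f p :=
  Finset.sum_equiv (Equiv.prodComm Γ Γ) (by simp [ne_comm]) (fun _ _ => rfl)

theorem two_sqrt_mul_le_mul_div_add_mul_div {a b x y : ℝ} (ha : 0 ≤ a) (hb : 0 ≤ b)
    (hx : 0 < x) (hy : 0 < y) : 2 * √(a * b) ≤ a * (y / x) + b * (x / y) := by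
  have key : 2 * √(a * b) * (x * y) ≤ a * y ^ 2 + b * x ^ 2 := by
    have hay : a * y ^ 2 = (√a * y) ^ 2 := by rw [mul_pow, Real.sq_sqrt ha]
    have hbx : b * x ^ 2 = (√b * x) ^ 2 := by rw [mul_pow, Real.sq_sqrt hb]
    rw [Real.sqrt_mul ha, hay, hbx]
    nlinarith [sq_nonneg (√a * y - √b * x)]
  have hsplit : a * (y / x) + b * (x / y) = (a * y ^ 2 + b * x ^ 2) / (x * y) := by
    field_simp
  rwa [hsplit, le_div_iff₀ (mul_pos hx hy)]

theorem Jhat_le_sum_sub_sqrt {c : Γ → Γ → ℝ} (hc : ∀ σ σ', σ ≠ σ' → 0 ≤ c σ σ')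
    {z : Γ → ℝ} (hz : ∀ σ, 0 < z σ) :
    Jhat c z ≤ ∑ p ∈ univ.filter (fun p : Γ × Γ => p.1 ≠ p.2),
      (c p.1 p.2 - √(c p.1 p.2 * c p.2 p.1)) := by
  set W := univ.filter (fun p : Γ × Γ => p.1 ≠ p.2)
  have hsym : ∑ p ∈ W, c p.2 p.1 * (z p.1 / z p.2) = ∑ p ∈ W, c p.1 p.2 * (z p.2 / z p.1) :=
    sum_offDiag_swap (fun p => c p.1 p.2 * (z p.2 / z p.1))
  have hamgm : ∑ p ∈ W, 2 * √(c p.1 p.2 * c p.2 p.1)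
      ≤ ∑ p ∈ W, (c p.1 p.2 * (z p.2 / z p.1) + c p.2 p.1 * (z p.1 / z p.2)) :=
    sum_le_sum fun p hp => by
      have hp : p.1 ≠ p.2 := (mem_filter.mp hp).2
      exact two_sqrt_mul_le_mul_div_add_mul_div (hc _ _ hp) (hc _ _ hp.symm) (hz _) (hz _)
  rw [sum_add_distrib, hsym, ← mul_sum] at hamgm
  rw [Jhat, sum_sub_distrib]
  simp only [mul_sub, mul_one, sum_sub_distrib]
  linarith

theorem Jhat_eq_sum_sub_sqrt {c : Γ → Γ → ℝ} (hc : ∀ σ σ', σ ≠ σ' → 0 ≤ c σ σ')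
    {w : Γ → ℝ} (hw : ∀ σ, 0 < w σ)
    (hbal : ∀ σ σ', σ ≠ σ' → c σ σ' * (w σ' / w σ) = c σ' σ * (w σ / w σ')) :
    Jhat c w = ∑ p ∈ univ.filter (fun p : Γ × Γ => p.1 ≠ p.2),
      (c p.1 p.2 - √(c p.1 p.2 * c p.2 p.1)) := by
  refine sum_congr rfl fun ⟨σ, σ'⟩ hp => ?_
  have hp : σ ≠ σ' := (mem_filter.mp hp).2
  have hsq : (c σ σ' * (w σ' / w σ)) ^ 2 = c σ σ' * c σ' σ := by
    rw [sq]
    nth_rewrite 2 [hbal σ σ' hp]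
    field_simp [(hw σ).ne', (hw σ').ne']
  have hnonneg : 0 ≤ c σ σ' * (w σ' / w σ) :=
    mul_nonneg (hc σ σ' hp) (div_pos (hw σ') (hw σ)).le
  rw [← hsq, Real.sqrt_sq hnonneg]
  ring

theorem Jfun_eq_Jhat_of_forall_le {c : Γ → Γ → ℝ} {w : Γ → ℝ} (hw : ∀ σ, 0 < w σ)
    (hmax : ∀ z : Γ → ℝ, (∀ σ, 0 < z σ) → Jhat c z ≤ Jhat c w) :
    Jfun c = Jhat c w :=
  have : Nonempty {z : Γ → ℝ // ∀ σ, 0 < z σ} := ⟨⟨w, hw⟩⟩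
  le_antisymm (ciSup_le fun z => hmax z.1 z.2)
    (le_ciSup (f := fun z : {z : Γ → ℝ // ∀ σ, 0 < z σ} => Jhat c z.1)
      ⟨Jhat c w, by rintro _ ⟨z, rfl⟩; exact hmax z.1 z.2⟩ ⟨w, hw⟩)

end Jhat

theorem mul_sqrt_ratio_symm_of_detailed_balance {p p' m m' r r' : ℝ} (hp : 0 < p) (hp' : 0 < p')
    (hm : 0 < m) (hm' : 0 < m') (hrev : m * r = m' * r') :
    p * r * (√(p' / m') / √(p / m)) = p' * r' * (√(p / m) / √(p' / m')) := by
  have ha : 0 < √(p / m) := Real.sqrt_pos.mpr (div_pos hp hm)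
  have hb : 0 < √(p' / m') := Real.sqrt_pos.mpr (div_pos hp' hm')
  rw [mul_div_assoc', mul_div_assoc', div_eq_div_iff ha.ne' hb.ne', mul_assoc (p * r),
    mul_assoc (p' * r'), Real.mul_self_sqrt (div_pos hp' hm').le, Real.mul_self_sqrt (div_pos hp hm).le]
  field_simp
  linear_combination hrev

theorem sqrt_div_div_sqrt_div {p p' m m' : ℝ} (hp : 0 ≤ p) (hm : 0 ≤ m) :
    √(p' / m') / √(p / m) = √(p' * m / (p * m')) := by
  rw [← Real.sqrt_div' _ (div_nonneg hp hm), div_div_div_eq, mul_comm m']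

theorem stmt6_general {Γ : Type*} [Fintype Γ] [DecidableEq Γ]
    (r : Γ → Γ → ℝ) (hr : ∀ σ σ' : Γ, σ ≠ σ' → 0 ≤ r σ σ')
    (μ : Γ → ℝ) (hμpos : ∀ σ, 0 < μ σ)
    (hrev : ∀ σ σ' : Γ, σ ≠ σ' → μ σ * r σ σ' = μ σ' * r σ' σ)
    (π : Γ → ℝ) (hπ : ∀ σ, 0 < π σ) :
    (∀ z : Γ → ℝ, (∀ σ, 0 < z σ) →
        Jhat (fun σ σ' => π σ * r σ σ') z
          ≤ Jhat (fun σ σ' => π σ * r σ σ') (fun σ => Real.sqrt (π σ / μ σ))) ∧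
    Jfun (fun σ σ' => π σ * r σ σ')
      = ∑ p ∈ Finset.univ.filter (fun p : Γ × Γ => p.1 ≠ p.2),
          π p.1 * r p.1 p.2 * (1 - Real.sqrt (π p.2 * μ p.1 / (π p.1 * μ p.2))) := by
  have hc : ∀ σ σ', σ ≠ σ' → 0 ≤ π σ * r σ σ' := fun σ σ' h => mul_nonneg (hπ σ).le (hr σ σ' h)
  have hw : ∀ σ, 0 < √(π σ / μ σ) := fun σ => Real.sqrt_pos.mpr (div_pos (hπ σ) (hμpos σ))
  have hmax : ∀ z : Γ → ℝ, (∀ σ, 0 < z σ) →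
      Jhat (fun σ σ' => π σ * r σ σ') z
        ≤ Jhat (fun σ σ' => π σ * r σ σ') (fun σ => √(π σ / μ σ)) := fun z hz =>
    (Jhat_le_sum_sub_sqrt hc hz).trans_eq <| .symm <| Jhat_eq_sum_sub_sqrt hc hw fun σ σ' h =>
      mul_sqrt_ratio_symm_of_detailed_balance (hπ σ) (hπ σ') (hμpos σ) (hμpos σ') (hrev σ σ' h)
  refine ⟨hmax, ?_⟩
  rw [Jfun_eq_Jhat_of_forall_le hw hmax, Jhat]
  exact sum_congr rfl fun p _ => by rw [sqrt_div_div_sqrt_div (hπ p.1).le (hμpos p.1).le]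

/-- for irreducible rates `r`, a strictly positive reversible probability `μ`,
and a strictly positive measure `π`, the supremum
`j(π,r) = sup_{z ∈ (0,∞)^Γ} Σ_{(σ,σ')∈W} π(σ) r(σ,σ')(1 − z_{σ'}/z_σ)` is attained at
`z_σ = √(π(σ)/μ(σ))` and equals
`Σ_{(σ,σ')∈W} π(σ) r(σ,σ') (1 − √(π(σ')μ(σ)/(π(σ)μ(σ'))))`. -/
theorem stmt6 {Γ : Type*} [Fintype Γ] [DecidableEq Γ] (hcard : 1 < Fintype.card Γ)
    (r : Γ → Γ → ℝ) (hr : ∀ σ σ' : Γ, σ ≠ σ' → 0 ≤ r σ σ')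
    (hirr : ∀ σ σ' : Γ, σ ≠ σ' → Relation.TransGen (fun a b => 0 < r a b) σ σ')
    (μ : Γ → ℝ) (hμpos : ∀ σ, 0 < μ σ) (hμsum : ∑ σ, μ σ = 1)
    (hrev : ∀ σ σ' : Γ, σ ≠ σ' → μ σ * r σ σ' = μ σ' * r σ' σ)
    (π : Γ → ℝ) (hπ : ∀ σ, 0 < π σ) :
    (∀ z : Γ → ℝ, (∀ σ, 0 < z σ) →
        Jhat (fun σ σ' => π σ * r σ σ') z
          ≤ Jhat (fun σ σ' => π σ * r σ σ') (fun σ => Real.sqrt (π σ / μ σ))) ∧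
    Jfun (fun σ σ' => π σ * r σ σ')
      = ∑ p ∈ Finset.univ.filter (fun p : Γ × Γ => p.1 ≠ p.2),
          π p.1 * r p.1 p.2 * (1 - Real.sqrt (π p.2 * μ p.1 / (π p.1 * μ p.2))) :=
  stmt6_general r hr μ hμpos hrev π hπ
end

section
/- In the setting where each F_σ : ℝ^d × [0,T] → ℝ^d is continuous, locally Lipschitz in x uniformly in t, and satisfies |F_σ(x,t)| ≤ κ₁ + κ₂|x|: let ρ^{(n)}, ρ : [0,T] → [0,1]^Γ be measurable with Σ_σ ρ^{(n)}_σ(t) = 1 and Σ_σ ρ_σ(t) = 1 almost everywhere, and suppose that for each σ ∈ Γ, sup_{t∈[0,T]} | ∫₀^t (ρ^{(n)}_σ(s) − ρ_σ(s)) ds | → 0 as n → ∞. Let x^{(n)} and x be the unique continuous solutions of the integral equations y(t) = x₀ + Σ_σ ∫₀^t F_σ(y(s),s) ρ^{(n)}_σ(s) ds and y(t) = x₀ + Σ_σ ∫₀^t F_σ(y(s),s) ρ_σ(s) ds respectively. Then x^{(n)} → x uniformly on [0,T]. -/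
/-!
Linear growth of the `F σ` and Grönwall's inequality bound all the solutions by one constant `R`,
and on the ball of radius `R` the `F σ` are Lipschitz. Subtracting the two integral equations and
applying Grönwall again bounds `‖x⁽ⁿ⁾ t - x t‖` on `[0, T]` by a multiple of the sup of the
perturbation `∑ σ, ∫₀ᵗ (ρ⁽ⁿ⁾_σ - ρ_σ) F_σ(x s, s) ds`. This perturbation tends to `0` uniformly:
on a fine uniform partition of `[0, t]` the integrand `F_σ(x s, s)` is nearly constant on every
piece, while the integral of `ρ⁽ⁿ⁾_σ - ρ_σ` over every piece is eventually small, uniformly in `t`.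
-/

open Set MeasureTheory Filter Topology Real
open scoped NNReal

theorem exists_monotone_partition {a t c : ℝ} (k : ℕ) (hc : 0 ≤ c) (hat : a ≤ t)
    (htk : t ≤ a + k * c) :
    ∃ u : ℕ → ℝ, Monotone u ∧ u 0 = a ∧ u k = t ∧ ∀ i, u (i + 1) ≤ u i + c := by
  refine ⟨fun i => min (a + i * c) t, fun i j hij => ?_, by simp [hat], by simp [htk],
    fun i => ?_⟩
  · exact min_le_min_right _ (by gcongr)
  · change min (a + ((i + 1 : ℕ) : ℝ) * c) t ≤ min (a + i * c) t + c
    rw [← min_add_add_right]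
    push_cast
    exact min_le_min (by linarith) (le_add_of_nonneg_right hc)

theorem ContinuousOn.comp_graph {α β γ : Type*} [TopologicalSpace α] [TopologicalSpace β]
    [TopologicalSpace γ] {f : α → β → γ} {s : Set β}
    (hf : ContinuousOn (fun p : α × β => f p.1 p.2) (univ ×ˢ s)) {y : β → α}
    (hy : ContinuousOn y s) : ContinuousOn (fun t => f (y t) t) s :=
  hf.comp (hy.prodMk continuousOn_id) fun _ ht => ⟨mem_univ _, ht⟩

theorem tendstoUniformlyOn_finsetSum {ι κ α E : Type*} [AddCommGroup E] [UniformSpace E]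
    [IsUniformAddGroup E] {l : Filter κ} {s : Finset ι} {f : ι → κ → α → E} {g : ι → α → E}
    {S : Set α} (h : ∀ i ∈ s, TendstoUniformlyOn (f i) (g i) l S) :
    TendstoUniformlyOn (fun n t => ∑ i ∈ s, f i n t) (fun t => ∑ i ∈ s, g i t) l S := by
  have key := tendsto_finsetSum (f := fun i n => UniformOnFun.ofFun {S} (f i n))
    (a := fun i => UniformOnFun.ofFun {S} (g i)) s fun i hi =>
      UniformOnFun.tendsto_iff_tendstoUniformlyOn.2 fun S' hS' => by
        rw [mem_singleton_iff.1 hS']; exact h i hi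
  convert UniformOnFun.tendsto_iff_tendstoUniformlyOn.1 key S rfl using 1
  · ext n t; exact (Finset.sum_apply t s fun c => f c n).symm
  · ext t; exact (Finset.sum_apply t s g).symm

theorem Measurable.integrableOn_Icc_of_abs_le {f : ℝ → ℝ} (hf : Measurable f) {a b C : ℝ}
    (hC : ∀ s ∈ Icc a b, |f s| ≤ C) : IntegrableOn f (Icc a b) :=
  Measure.integrableOn_of_bounded measure_Icc_lt_top.ne hf.aestronglyMeasurable
    ((ae_restrict_iff' measurableSet_Icc).2 (ae_of_all _ hC))

theorem tendstoUniformlyOn_primitive_of_tendsto_iSup {ι : Type*} {l : Filter ι} {a b : ℝ}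
    {h : ι → ℝ → ℝ} (hb : ∀ i, ∀ s ∈ Icc a b, |h i s| ≤ 1)
    (hH : Tendsto (fun i => ⨆ t : Icc a b, |∫ s in a..(t : ℝ), h i s|) l (𝓝 0)) :
    TendstoUniformlyOn (fun i t => ∫ s in a..t, h i s) 0 l (Icc a b) := by
  have hbdd : ∀ i, BddAbove (range fun t : Icc a b => |∫ s in a..(t : ℝ), h i s|) := by
    refine fun i => ⟨b - a, ?_⟩
    rintro _ ⟨⟨t, ht⟩, rfl⟩
    have := intervalIntegral.norm_integral_le_of_norm_le_const (a := a) (b := t) (C := 1)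
      (f := h i) fun s hs => by
        rw [uIoc_of_le ht.1] at hs
        exact hb i s ⟨hs.1.le, hs.2.trans ht.2⟩
    rw [Real.norm_eq_abs, one_mul, abs_of_nonneg (sub_nonneg.2 ht.1)] at this
    exact this.trans (by linarith [ht.2])
  rw [Metric.tendstoUniformlyOn_iff]
  intro ε hε
  filter_upwards [hH.eventually (gt_mem_nhds hε)] with i hi t ht
  rw [Pi.zero_apply, dist_zero_left, Real.norm_eq_abs]
  exact (le_ciSup (hbdd i) ⟨t, ht⟩).trans_lt hi

theorem ContinuousOn.integral_hasDerivWithinAt_Ici {a b t : ℝ} {φ : ℝ → ℝ}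
    (hφ : ContinuousOn φ (Icc a b)) (ht : t ∈ Ico a b) :
    HasDerivWithinAt (fun u => ∫ s in a..u, φ s) (φ t) (Ici t) t := by
  have hnhds : Icc a b ∈ 𝓝[>] t := Icc_mem_nhdsGT_of_mem ht
  exact intervalIntegral.integral_hasDerivWithinAt_right
    (hφ.mono (uIcc_subset_Icc (left_mem_Icc.2 (ht.1.trans ht.2.le))
      (Ico_subset_Icc_self ht))).intervalIntegrable
    ((hφ.stronglyMeasurableAtFilter_nhdsWithin measurableSet_Icc t).filter_mono
      (nhdsWithin_le_of_mem hnhds))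
    ((hφ t (Ico_subset_Icc_self ht)).mono_of_mem_nhdsWithin hnhds)

theorem le_mul_exp_of_le_add_mul_integral {a b A B : ℝ} {φ : ℝ → ℝ}
    (hφ : ContinuousOn φ (Icc a b)) (hB : 0 ≤ B)
    (h : ∀ t ∈ Icc a b, φ t ≤ A + B * ∫ s in a..t, φ s) :
    ∀ t ∈ Icc a b, φ t ≤ A * exp (B * (t - a)) := by
  intro t ht
  have hab : uIcc a b = Icc a b := uIcc_of_le (ht.1.trans ht.2)
  have hΦ : ∀ u ∈ Icc a b, (∫ s in a..u, φ s) ≤ gronwallBound 0 B A (u - a) := by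
    refine le_gronwallBound_of_liminf_deriv_right_le (f' := φ) ?_ (fun u hu _ hr =>
      (hφ.integral_hasDerivWithinAt_Ici hu).liminf_right_slope_le hr) (by simp) ?_
    · rw [← hab] at hφ ⊢
      exact intervalIntegral.continuousOn_primitive_interval hφ.integrableOn_uIcc
    · intro u hu
      linarith [h u (Ico_subset_Icc_self hu)]
  calc φ t ≤ A + B * gronwallBound 0 B A (t - a) := (h t ht).trans (by gcongr; exact hΦ t ht)
    _ = A * exp (B * (t - a)) := by
      rcases eq_or_ne B 0 with rfl | hB0
      · simp [gronwallBound_K0]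
      · rw [gronwallBound_of_K_ne_0 hB0]; field_simp; ring

section Oscillation

variable {E : Type*} [NormedAddCommGroup E] [NormedSpace ℝ E] [CompleteSpace E]

theorem norm_integral_smul_le_of_norm_sub_le {h : ℝ → ℝ} {g : ℝ → E} {u v ε : ℝ} (huv : u ≤ v)
    (hh : IntervalIntegrable h volume u v) (hg : ContinuousOn g (Icc u v))
    (hb : ∀ s ∈ Icc u v, |h s| ≤ 1) (hε : ∀ s ∈ Icc u v, ‖g s - g u‖ ≤ ε) :
    ‖∫ s in u..v, h s • g s‖ ≤ ε * (v - u) + |∫ s in u..v, h s| * ‖g u‖ := by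
  have hsplit : ∫ s in u..v, h s • g s =
      (∫ s in u..v, h s • (g s - g u)) + (∫ s in u..v, h s) • g u := by
    rw [← intervalIntegral.integral_smul_const, ← intervalIntegral.integral_add
      (hh.smul_continuousOn ((uIcc_of_le huv).symm ▸ hg.sub continuousOn_const))
      (hh.smul_continuousOn continuousOn_const)]
    simp_rw [← smul_add, sub_add_cancel]
  have hosc : ‖∫ s in u..v, h s • (g s - g u)‖ ≤ ε * (v - u) := by
    rw [← abs_of_nonneg (sub_nonneg.2 huv)]
    refine intervalIntegral.norm_integral_le_of_norm_le_const fun s hs => ?_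
    rw [uIoc_of_le huv] at hs
    rw [norm_smul, Real.norm_eq_abs]
    exact (mul_le_of_le_one_left (norm_nonneg _) (hb s (Ioc_subset_Icc_self hs))).trans
      (hε s (Ioc_subset_Icc_self hs))
  rw [hsplit, ← Real.norm_eq_abs, ← norm_smul]
  exact (norm_add_le _ _).trans (add_le_add hosc le_rfl)

theorem norm_integral_smul_le_of_partition {h : ℝ → ℝ} {g : ℝ → E} {u : ℕ → ℝ} {k : ℕ}
    {ε η M : ℝ} (hu : Monotone u) (hh : IntegrableOn h (Icc (u 0) (u k)))
    (hg : ContinuousOn g (Icc (u 0) (u k))) (hb : ∀ s ∈ Icc (u 0) (u k), |h s| ≤ 1)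
    (hε : ∀ i < k, ∀ s ∈ Icc (u i) (u (i + 1)), ‖g s - g (u i)‖ ≤ ε)
    (hη : ∀ i ≤ k, |∫ s in u 0..u i, h s| ≤ η) (hM : ∀ i < k, ‖g (u i)‖ ≤ M) :
    ‖∫ s in u 0..u k, h s • g s‖ ≤ ε * (u k - u 0) + k * (2 * η * M) := by
  have hint : ∀ i ≤ k, ∀ j ≤ k, IntervalIntegrable h volume (u i) (u j) := fun i hi j hj =>
    (hh.mono_set (uIcc_subset_Icc ⟨hu (Nat.zero_le i), hu hi⟩
      ⟨hu (Nat.zero_le j), hu hj⟩)).intervalIntegrable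
  have hpiece : ∀ i < k,
      ‖∫ s in u i..u (i + 1), h s • g s‖ ≤ ε * (u (i + 1) - u i) + 2 * η * M := by
    intro i hi
    have hIcc : Icc (u i) (u (i + 1)) ⊆ Icc (u 0) (u k) :=
      Icc_subset_Icc (hu (Nat.zero_le i)) (hu hi)
    have hprim : |∫ s in u i..u (i + 1), h s| ≤ 2 * η := by
      rw [← intervalIntegral.integral_interval_sub_left (hint 0 k.zero_le _ hi)
        (hint 0 k.zero_le i hi.le)]
      linarith [abs_sub (∫ s in u 0..u (i + 1), h s) (∫ s in u 0..u i, h s), hη _ hi, hη i hi.le]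
    refine (norm_integral_smul_le_of_norm_sub_le (hu i.le_succ) (hint i hi.le _ hi)
      (hg.mono hIcc) (fun s hs => hb s (hIcc hs)) (hε i hi)).trans (add_le_add le_rfl ?_)
    exact mul_le_mul hprim (hM i hi) (norm_nonneg _) ((abs_nonneg _).trans hprim)
  rw [← intervalIntegral.sum_integral_adjacent_intervals fun i hi =>
    (hint i hi.le _ hi).smul_continuousOn
      (hg.mono ((uIcc_of_le (hu i.le_succ)).trans_subset
        (Icc_subset_Icc (hu (Nat.zero_le i)) (hu hi))))]
  calc ‖∑ i ∈ Finset.range k, ∫ s in u i..u (i + 1), h s • g s‖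
      ≤ ∑ i ∈ Finset.range k, (ε * (u (i + 1) - u i) + 2 * η * M) :=
        (norm_sum_le _ _).trans (Finset.sum_le_sum fun i hi => hpiece i (Finset.mem_range.1 hi))
    _ = ε * (u k - u 0) + k * (2 * η * M) := by
        rw [Finset.sum_add_distrib, ← Finset.mul_sum, Finset.sum_range_sub, Finset.sum_const,
          Finset.card_range, nsmul_eq_mul]

theorem norm_integral_smul_le_of_mesh {h : ℝ → ℝ} {g : ℝ → E} {a b t δ ε η M : ℝ} {k : ℕ}
    (hδ : 0 ≤ δ) (hk : b - a ≤ k * δ) (ht : t ∈ Icc a b) (hh : IntegrableOn h (Icc a b))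
    (hg : ContinuousOn g (Icc a b)) (hb : ∀ s ∈ Icc a b, |h s| ≤ 1)
    (hgδ : ∀ s ∈ Icc a b, ∀ s' ∈ Icc a b, dist s s' ≤ δ → dist (g s) (g s') ≤ ε)
    (hη : ∀ s ∈ Icc a b, |∫ r in a..s, h r| ≤ η) (hM : ∀ s ∈ Icc a b, ‖g s‖ ≤ M) :
    ‖∫ s in a..t, h s • g s‖ ≤ ε * (t - a) + k * (2 * η * M) := by
  obtain ⟨u, hu, hu0, huk, hstep⟩ := exists_monotone_partition k hδ ht.1 (by linarith [ht.2])
  have humem : ∀ j ≤ k, u j ∈ Icc a b := fun j hj =>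
    ⟨hu0 ▸ hu (Nat.zero_le j), (huk ▸ hu hj).trans ht.2⟩
  have hsub : Icc (u 0) (u k) ⊆ Icc a b := by rw [hu0, huk]; exact Icc_subset_Icc_right ht.2
  have key := norm_integral_smul_le_of_partition (ε := ε) (η := η) (M := M) hu
    (hh.mono_set hsub) (hg.mono hsub) (fun s hs => hb s (hsub hs))
    (fun j hj s hs => by
      rw [← dist_eq_norm]
      refine hgδ s ⟨(humem j hj.le).1.trans hs.1, hs.2.trans (humem _ hj).2⟩ _ (humem j hj.le) ?_
      rw [Real.dist_eq, abs_of_nonneg (by linarith [hs.1])]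
      linarith [hstep j, hs.2])
    (fun j hj => hu0 ▸ hη _ (humem j hj)) (fun j hj => hM _ (humem j hj.le))
  rwa [hu0, huk] at key

theorem tendstoUniformlyOn_integral_smul {ι : Type*} {l : Filter ι} {a b : ℝ} {g : ℝ → E}
    {h : ι → ℝ → ℝ} (hg : ContinuousOn g (Icc a b)) (hh : ∀ i, IntegrableOn (h i) (Icc a b))
    (hb : ∀ i, ∀ s ∈ Icc a b, |h i s| ≤ 1)
    (hH : TendstoUniformlyOn (fun i t => ∫ s in a..t, h i s) 0 l (Icc a b)) :
    TendstoUniformlyOn (fun i t => ∫ s in a..t, h i s • g s) 0 l (Icc a b) := by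
  rcases lt_or_ge b a with hba | hab
  · rw [Icc_eq_empty_of_lt hba]
    exact tendstoUniformlyOn_empty
  obtain ⟨M, hM⟩ := isCompact_Icc.exists_bound_of_continuousOn hg
  have hM0 : 0 ≤ M := (norm_nonneg _).trans (hM a (left_mem_Icc.2 hab))
  rw [Metric.tendstoUniformlyOn_iff] at hH ⊢
  intro ε hε
  obtain ⟨ε', hε', hε'ε⟩ : ∃ ε' > 0, ε' * (b - a + 1) = ε / 2 :=
    ⟨ε / 2 / (b - a + 1), by positivity, div_mul_cancel₀ _ (by linarith)⟩
  obtain ⟨δ, hδ, hgδ⟩ := Metric.uniformContinuousOn_iff_le.1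
    (isCompact_Icc.uniformContinuousOn_of_continuous hg) ε' hε'
  obtain ⟨k, hk⟩ := exists_nat_ge ((b - a) / δ)
  obtain ⟨η, hη, hηε⟩ : ∃ η > 0, k * (2 * η * M) < ε / 2 := by
    refine ⟨ε / (4 * (k * M + 1)), by positivity, ?_⟩
    have : 4 * (ε / (4 * (k * M + 1))) * (k * M + 1) = ε := by field_simp
    nlinarith [show 0 < ε / (4 * (k * M + 1)) by positivity]
  filter_upwards [hH η hη] with i hi t ht
  have key := norm_integral_smul_le_of_mesh hδ.le ((div_le_iff₀ hδ).1 hk) ht (hh i) hg (hb i) hgδ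
    (fun s hs => by simpa using (hi s hs).le) hM
  have : ε' * (t - a) < ε' * (b - a + 1) := by gcongr; linarith [ht.2]
  rw [Pi.zero_apply, dist_zero_left]
  linarith

end Oscillation

section IntegralEquation

variable {Γ E : Type*} [Fintype Γ] [NormedAddCommGroup E] [NormedSpace ℝ E]

def IsIntegralSolution (F : Γ → E → ℝ → E) (x₀ : E) (w : ℝ → Γ → ℝ) (T : ℝ) (y : ℝ → E) :
    Prop :=
  ContinuousOn y (Icc 0 T) ∧
    ∀ t ∈ Icc 0 T, y t = x₀ + ∑ σ, ∫ s in 0..t, w s σ • F σ (y s) s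

theorem norm_sum_integral_smul_le {w : ℝ → Γ → ℝ} {f : Γ → ℝ → E} {G : Γ → ℝ → ℝ} {a b : ℝ}
    (hab : a ≤ b) (hw : ∀ s ∈ Icc a b, ∀ σ, |w s σ| ≤ 1)
    (hf : ∀ s ∈ Icc a b, ∀ σ, ‖f σ s‖ ≤ G σ s) (hG : ∀ σ, IntervalIntegrable (G σ) volume a b) :
    ‖∑ σ, ∫ s in a..b, w s σ • f σ s‖ ≤ ∑ σ, ∫ s in a..b, G σ s := by
  refine (norm_sum_le _ _).trans (Finset.sum_le_sum fun σ _ => ?_)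
  refine intervalIntegral.norm_integral_le_of_norm_le hab (ae_of_all _ fun s hs => ?_) (hG σ)
  rw [norm_smul, Real.norm_eq_abs]
  exact (mul_le_of_le_one_left (norm_nonneg _) (hw s (Ioc_subset_Icc_self hs) σ)).trans
    (hf s (Ioc_subset_Icc_self hs) σ)

variable {F : Γ → E → ℝ → E} {x₀ : E} {T : ℝ}

theorem IsIntegralSolution.norm_le {w : ℝ → Γ → ℝ} {y : ℝ → E} {κ₁ κ₂ : ℝ} (hκ₁ : 0 ≤ κ₁)
    (hκ₂ : 0 ≤ κ₂) (hgrow : ∀ σ x, ∀ t ∈ Icc 0 T, ‖F σ x t‖ ≤ κ₁ + κ₂ * ‖x‖)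
    (hw : ∀ s ∈ Icc 0 T, ∀ σ, |w s σ| ≤ 1) (hy : IsIntegralSolution F x₀ w T y) :
    ∀ t ∈ Icc 0 T,
      ‖y t‖ ≤ (‖x₀‖ + Fintype.card Γ * κ₁ * T) * exp (Fintype.card Γ * κ₂ * T) := by
  set N : ℝ := (Fintype.card Γ : ℝ)
  have hyn : ContinuousOn (fun t => ‖y t‖) (Icc 0 T) := hy.1.norm
  have hbound : ∀ t ∈ Icc 0 T,
      ‖y t‖ ≤ (‖x₀‖ + N * κ₁ * T) + N * κ₂ * ∫ s in 0..t, ‖y s‖ := by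
    intro t ht
    have hsub : Icc 0 t ⊆ Icc 0 T := Icc_subset_Icc_right ht.2
    have hint : IntervalIntegrable (fun s => ‖y s‖) volume 0 t :=
      (hyn.mono hsub).intervalIntegrable_of_Icc ht.1
    have hsum := norm_sum_integral_smul_le (G := fun _ s => κ₁ + κ₂ * ‖y s‖) ht.1
      (fun s hs => hw s (hsub hs)) (fun s hs σ => hgrow σ (y s) s (hsub hs))
      (fun _ => intervalIntegrable_const.add (hint.const_mul κ₂))
    rw [Finset.sum_const, Finset.card_univ, nsmul_eq_mul,
      intervalIntegral.integral_add intervalIntegrable_const (hint.const_mul κ₂),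
      intervalIntegral.integral_const, intervalIntegral.integral_const_mul, smul_eq_mul] at hsum
    have : N * ((t - 0) * κ₁) ≤ N * (κ₁ * T) := by
      rw [sub_zero, mul_comm t]
      gcongr
      exact ht.2
    calc ‖y t‖ ≤ ‖x₀‖ + ‖∑ σ, ∫ s in 0..t, w s σ • F σ (y s) s‖ := by
          rw [hy.2 t ht]; exact norm_add_le _ _
      _ ≤ _ := by linarith
  intro t ht
  calc ‖y t‖ ≤ (‖x₀‖ + N * κ₁ * T) * exp (N * κ₂ * (t - 0)) :=
        le_mul_exp_of_le_add_mul_integral hyn (by positivity) hbound t ht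
    _ ≤ (‖x₀‖ + N * κ₁ * T) * exp (N * κ₂ * T) := by
        have : 0 ≤ T := ht.1.trans ht.2
        gcongr
        linarith [ht.2]

theorem IsIntegralSolution.sub_eq {w v : ℝ → Γ → ℝ} {y z : ℝ → E}
    (hFc : ∀ σ, ContinuousOn (fun p : E × ℝ => F σ p.1 p.2) (univ ×ˢ Icc 0 T))
    (hwi : ∀ σ, IntegrableOn (fun s => w s σ) (Icc 0 T))
    (hvi : ∀ σ, IntegrableOn (fun s => v s σ) (Icc 0 T))
    (hy : IsIntegralSolution F x₀ w T y) (hz : IsIntegralSolution F x₀ v T z) {t : ℝ}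
    (ht : t ∈ Icc 0 T) :
    y t - z t = (∑ σ, ∫ s in 0..t, w s σ • (F σ (y s) s - F σ (z s) s)) +
      ∑ σ, ∫ s in 0..t, (w s σ - v s σ) • F σ (z s) s := by
  have huIcc : uIcc 0 t ⊆ Icc 0 T := (uIcc_of_le ht.1).trans_subset (Icc_subset_Icc_right ht.2)
  have hint : ∀ {u : ℝ → Γ → ℝ} {x : ℝ → E}, (∀ σ, IntegrableOn (fun s => u s σ) (Icc 0 T)) →
      ContinuousOn x (Icc 0 T) →
      ∀ σ, IntervalIntegrable (fun s => u s σ • F σ (x s) s) volume 0 t :=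
    fun hu hx σ => ((hu σ).mono_set huIcc).intervalIntegrable.smul_continuousOn
      (((hFc σ).comp_graph hx).mono huIcc)
  rw [hy.2 t ht, hz.2 t ht, add_sub_add_left_eq_sub, ← Finset.sum_sub_distrib,
    ← Finset.sum_add_distrib]
  refine Finset.sum_congr rfl fun σ _ => ?_
  simp_rw [smul_sub, sub_smul]
  rw [intervalIntegral.integral_sub (hint hwi hy.1 σ) (hint hwi hz.1 σ),
    intervalIntegral.integral_sub (hint hwi hz.1 σ) (hint hvi hz.1 σ)]
  abel

theorem IsIntegralSolution.norm_sub_le {w v : ℝ → Γ → ℝ} {y z : ℝ → E} {K : Set E} {L : Γ → ℝ≥0}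
    {η : ℝ} (hFc : ∀ σ, ContinuousOn (fun p : E × ℝ => F σ p.1 p.2) (univ ×ˢ Icc 0 T))
    (hLip : ∀ σ, ∀ t ∈ Icc 0 T, LipschitzOnWith (L σ) (F σ · t) K)
    (hwi : ∀ σ, IntegrableOn (fun s => w s σ) (Icc 0 T))
    (hvi : ∀ σ, IntegrableOn (fun s => v s σ) (Icc 0 T)) (hw : ∀ s ∈ Icc 0 T, ∀ σ, |w s σ| ≤ 1)
    (hy : IsIntegralSolution F x₀ w T y) (hz : IsIntegralSolution F x₀ v T z)
    (hyK : MapsTo y (Icc 0 T) K) (hzK : MapsTo z (Icc 0 T) K)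
    (hD : ∀ t ∈ Icc 0 T, ‖∑ σ, ∫ s in 0..t, (w s σ - v s σ) • F σ (z s) s‖ ≤ η) :
    ∀ t ∈ Icc 0 T, ‖y t - z t‖ ≤ η * exp ((∑ σ, (L σ : ℝ)) * T) := by
  set Λ : ℝ := ∑ σ, (L σ : ℝ)
  have he : ContinuousOn (fun t => ‖y t - z t‖) (Icc 0 T) := (hy.1.sub hz.1).norm
  have hbound : ∀ t ∈ Icc 0 T, ‖y t - z t‖ ≤ η + Λ * ∫ s in 0..t, ‖y s - z s‖ := by
    intro t ht
    have hsub : Icc 0 t ⊆ Icc 0 T := Icc_subset_Icc_right ht.2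
    have hint : IntervalIntegrable (fun s => ‖y s - z s‖) volume 0 t :=
      (he.mono hsub).intervalIntegrable_of_Icc ht.1
    have hLsum := norm_sum_integral_smul_le (G := fun σ s => L σ * ‖y s - z s‖) ht.1
      (fun s hs => hw s (hsub hs))
      (fun s hs σ => (hLip σ s (hsub hs)).norm_sub_le (hyK (hsub hs)) (hzK (hsub hs)))
      (fun σ => hint.const_mul _)
    simp_rw [intervalIntegral.integral_const_mul, ← Finset.sum_mul] at hLsum
    rw [hy.sub_eq hFc hwi hvi hz ht]
    linarith [norm_add_le (∑ σ, ∫ s in 0..t, w s σ • (F σ (y s) s - F σ (z s) s))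
      (∑ σ, ∫ s in 0..t, (w s σ - v s σ) • F σ (z s) s), hD t ht]
  intro t ht
  have hη : 0 ≤ η := (norm_nonneg _).trans (hD t ht)
  calc ‖y t - z t‖ ≤ η * exp (Λ * (t - 0)) :=
        le_mul_exp_of_le_add_mul_integral he (by positivity) hbound t ht
    _ ≤ η * exp (Λ * T) := by gcongr; linarith [ht.2]

theorem IsIntegralSolution.tendstoUniformlyOn {ι : Type*} {l : Filter ι} {w : ι → ℝ → Γ → ℝ}
    {v : ℝ → Γ → ℝ} {y : ι → ℝ → E} {z : ℝ → E} {K : Set E} {L : Γ → ℝ≥0}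
    (hFc : ∀ σ, ContinuousOn (fun p : E × ℝ => F σ p.1 p.2) (univ ×ˢ Icc 0 T))
    (hLip : ∀ σ, ∀ t ∈ Icc 0 T, LipschitzOnWith (L σ) (F σ · t) K)
    (hwi : ∀ i σ, IntegrableOn (fun s => w i s σ) (Icc 0 T))
    (hvi : ∀ σ, IntegrableOn (fun s => v s σ) (Icc 0 T))
    (hw : ∀ i, ∀ s ∈ Icc 0 T, ∀ σ, |w i s σ| ≤ 1)
    (hy : ∀ i, IsIntegralSolution F x₀ (w i) T (y i)) (hz : IsIntegralSolution F x₀ v T z)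
    (hyK : ∀ i, MapsTo (y i) (Icc 0 T) K) (hzK : MapsTo z (Icc 0 T) K)
    (hD : TendstoUniformlyOn (fun i t => ∑ σ, ∫ s in 0..t, (w i s σ - v s σ) • F σ (z s) s) 0 l
      (Icc 0 T)) :
    TendstoUniformlyOn y z l (Icc 0 T) := by
  rw [Metric.tendstoUniformlyOn_iff] at hD ⊢
  intro ε hε
  set C := exp ((∑ σ, (L σ : ℝ)) * T)
  have hC : 0 < C := exp_pos _
  filter_upwards [hD (ε / (2 * C)) (by positivity)] with i hi t ht
  have hclose := (hy i).norm_sub_le hFc hLip (hwi i) hvi (hw i) hz (hyK i) hzK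
    (fun t ht => by simpa only [Pi.zero_apply, dist_zero_left] using (hi t ht).le) t ht
  rw [dist_comm, dist_eq_norm]
  calc ‖y i t - z t‖ ≤ ε / (2 * C) * C := hclose
    _ = ε / 2 := by field_simp
    _ < ε := half_lt_self hε

end IntegralEquation

theorem stmt12_general {Γ : Type*} [Fintype Γ] (d : ℕ) (T κ₁ κ₂ : ℝ)
    (hκ₁ : 0 < κ₁) (hκ₂ : 0 < κ₂)
    (F : Γ → EuclideanSpace ℝ (Fin d) → ℝ → EuclideanSpace ℝ (Fin d))
    (hFcont : ∀ σ : Γ, ContinuousOn (fun p : EuclideanSpace ℝ (Fin d) × ℝ => F σ p.1 p.2)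
      (Set.univ ×ˢ Set.Icc 0 T))
    (hFlip : ∀ σ : Γ, ∀ K : Set (EuclideanSpace ℝ (Fin d)), IsCompact K → ∃ L : ℝ,
      ∀ x ∈ K, ∀ y ∈ K, ∀ t ∈ Set.Icc (0:ℝ) T, ‖F σ x t - F σ y t‖ ≤ L * ‖x - y‖)
    (hFgrow : ∀ σ : Γ, ∀ x : EuclideanSpace ℝ (Fin d), ∀ t ∈ Set.Icc (0:ℝ) T,
      ‖F σ x t‖ ≤ κ₁ + κ₂ * ‖x‖)
    (x₀ : EuclideanSpace ℝ (Fin d))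
    (ρn : ℕ → ℝ → Γ → ℝ) (ρ : ℝ → Γ → ℝ)
    (hρnmeas : ∀ n, ∀ σ : Γ, Measurable fun t => ρn n t σ)
    (hρmeas : ∀ σ : Γ, Measurable fun t => ρ t σ)
    (hρnmem : ∀ n, ∀ t ∈ Set.Icc (0:ℝ) T, ∀ σ : Γ, ρn n t σ ∈ Set.Icc (0:ℝ) 1)
    (hρmem : ∀ t ∈ Set.Icc (0:ℝ) T, ∀ σ : Γ, ρ t σ ∈ Set.Icc (0:ℝ) 1)
    (hconv : ∀ σ : Γ,
      Filter.Tendsto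
        (fun n => ⨆ t : Set.Icc (0:ℝ) T, |∫ s in (0:ℝ)..(t:ℝ), (ρn n s σ - ρ s σ)|)
        Filter.atTop (nhds 0))
    (xn : ℕ → ℝ → EuclideanSpace ℝ (Fin d)) (x : ℝ → EuclideanSpace ℝ (Fin d))
    (hxncont : ∀ n, ContinuousOn (xn n) (Set.Icc 0 T))
    (hxcont : ContinuousOn x (Set.Icc 0 T))
    (hxn : ∀ n, ∀ t ∈ Set.Icc (0:ℝ) T,
      xn n t = x₀ + ∑ σ : Γ, ∫ s in (0:ℝ)..t, ρn n s σ • F σ (xn n s) s)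
    (hx : ∀ t ∈ Set.Icc (0:ℝ) T,
      x t = x₀ + ∑ σ : Γ, ∫ s in (0:ℝ)..t, ρ s σ • F σ (x s) s) :
    TendstoUniformlyOn (fun n => xn n) x Filter.atTop (Set.Icc 0 T) := by
  have hρnb : ∀ n, ∀ s ∈ Icc 0 T, ∀ σ, |ρn n s σ| ≤ 1 := fun n s hs σ =>
    abs_le.2 ⟨by linarith [(hρnmem n s hs σ).1], (hρnmem n s hs σ).2⟩
  have hρb : ∀ s ∈ Icc 0 T, ∀ σ, |ρ s σ| ≤ 1 := fun s hs σ =>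
    abs_le.2 ⟨by linarith [(hρmem s hs σ).1], (hρmem s hs σ).2⟩
  have hdiff : ∀ n, ∀ s ∈ Icc 0 T, ∀ σ, |ρn n s σ - ρ s σ| ≤ 1 := fun n s hs σ => by
    obtain ⟨hn₀, hn₁⟩ := hρnmem n s hs σ
    obtain ⟨h₀, h₁⟩ := hρmem s hs σ
    exact abs_sub_le_iff.2 ⟨by linarith, by linarith⟩
  have hsoln : ∀ n, IsIntegralSolution F x₀ (ρn n) T (xn n) := fun n => ⟨hxncont n, hxn n⟩
  have hsol : IsIntegralSolution F x₀ ρ T x := ⟨hxcont, hx⟩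
  set R := (‖x₀‖ + Fintype.card Γ * κ₁ * T) * exp (Fintype.card Γ * κ₂ * T)
  choose L hL using fun σ => hFlip σ _ (isCompact_closedBall (0 : EuclideanSpace ℝ (Fin d)) R)
  refine IsIntegralSolution.tendstoUniformlyOn (L := fun σ => (L σ).toNNReal) hFcont
    (fun σ t ht => LipschitzOnWith.of_dist_le' fun a ha b hb => by
      simpa only [dist_eq_norm] using hL σ a ha b hb t ht)
    (fun n σ => (hρnmeas n σ).integrableOn_Icc_of_abs_le (hρnb n · · σ))
    (fun σ => (hρmeas σ).integrableOn_Icc_of_abs_le (hρb · · σ)) hρnb hsoln hsol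
    (fun n t ht => mem_closedBall_zero_iff.2
      ((hsoln n).norm_le hκ₁.le hκ₂.le hFgrow (hρnb n) t ht))
    (fun t ht => mem_closedBall_zero_iff.2 (hsol.norm_le hκ₁.le hκ₂.le hFgrow hρb t ht)) ?_
  simpa only [Pi.sub_apply, Pi.zero_apply, Finset.sum_const_zero, ← Pi.zero_def] using
    tendstoUniformlyOn_finsetSum fun σ _ => tendstoUniformlyOn_integral_smul
      ((hFcont σ).comp_graph hxcont)
      (fun n => ((hρnmeas n σ).sub (hρmeas σ)).integrableOn_Icc_of_abs_le (hdiff n · · σ))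
      (hdiff · · · σ) (tendstoUniformlyOn_primitive_of_tendsto_iSup (hdiff · · · σ) (hconv σ))

/-- continuity of the map `ρ ↦ x`. If `ρ^{(n)} → ρ` in the sense that
`sup_{t∈[0,T]} |∫₀^t (ρ^{(n)}_σ − ρ_σ)| → 0` for each `σ`, then the corresponding solutions
of the integral equations converge uniformly on `[0,T]`. -/
theorem stmt12 {Γ : Type*} [Fintype Γ] (d : ℕ) (T κ₁ κ₂ : ℝ)
    (hT : 0 < T) (hκ₁ : 0 < κ₁) (hκ₂ : 0 < κ₂)
    (F : Γ → EuclideanSpace ℝ (Fin d) → ℝ → EuclideanSpace ℝ (Fin d))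
    (hFcont : ∀ σ : Γ, ContinuousOn (fun p : EuclideanSpace ℝ (Fin d) × ℝ => F σ p.1 p.2)
      (Set.univ ×ˢ Set.Icc 0 T))
    (hFlip : ∀ σ : Γ, ∀ K : Set (EuclideanSpace ℝ (Fin d)), IsCompact K → ∃ L : ℝ,
      ∀ x ∈ K, ∀ y ∈ K, ∀ t ∈ Set.Icc (0:ℝ) T, ‖F σ x t - F σ y t‖ ≤ L * ‖x - y‖)
    (hFgrow : ∀ σ : Γ, ∀ x : EuclideanSpace ℝ (Fin d), ∀ t ∈ Set.Icc (0:ℝ) T,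
      ‖F σ x t‖ ≤ κ₁ + κ₂ * ‖x‖)
    (x₀ : EuclideanSpace ℝ (Fin d))
    (ρn : ℕ → ℝ → Γ → ℝ) (ρ : ℝ → Γ → ℝ)
    (hρnmeas : ∀ n, ∀ σ : Γ, Measurable fun t => ρn n t σ)
    (hρmeas : ∀ σ : Γ, Measurable fun t => ρ t σ)
    (hρnmem : ∀ n, ∀ t ∈ Set.Icc (0:ℝ) T, ∀ σ : Γ, ρn n t σ ∈ Set.Icc (0:ℝ) 1)
    (hρmem : ∀ t ∈ Set.Icc (0:ℝ) T, ∀ σ : Γ, ρ t σ ∈ Set.Icc (0:ℝ) 1)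
    (hρnsum : ∀ n, ∀ᵐ t ∂(volume.restrict (Set.Icc (0:ℝ) T)), ∑ σ : Γ, ρn n t σ = 1)
    (hρsum : ∀ᵐ t ∂(volume.restrict (Set.Icc (0:ℝ) T)), ∑ σ : Γ, ρ t σ = 1)
    (hconv : ∀ σ : Γ,
      Filter.Tendsto
        (fun n => ⨆ t : Set.Icc (0:ℝ) T, |∫ s in (0:ℝ)..(t:ℝ), (ρn n s σ - ρ s σ)|)
        Filter.atTop (nhds 0))
    (xn : ℕ → ℝ → EuclideanSpace ℝ (Fin d)) (x : ℝ → EuclideanSpace ℝ (Fin d))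
    (hxncont : ∀ n, ContinuousOn (xn n) (Set.Icc 0 T))
    (hxcont : ContinuousOn x (Set.Icc 0 T))
    (hxn : ∀ n, ∀ t ∈ Set.Icc (0:ℝ) T,
      xn n t = x₀ + ∑ σ : Γ, ∫ s in (0:ℝ)..t, ρn n s σ • F σ (xn n s) s)
    (hx : ∀ t ∈ Set.Icc (0:ℝ) T,
      x t = x₀ + ∑ σ : Γ, ∫ s in (0:ℝ)..t, ρ s σ • F σ (x s) s) :
    TendstoUniformlyOn (fun n => xn n) x Filter.atTop (Set.Icc 0 T) :=
  stmt12_general d T κ₁ κ₂ hκ₁ hκ₂ F hFcont hFlip hFgrow x₀ ρn ρ hρnmeas hρmeas hρnmem hρmem hconv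
    xn x hxncont hxcont hxn hx
end

section
/- Let f_n (n ≥ 1) and f be measurable functions from [0,T] to [0,1]. Then the following are equivalent: (i) ∫₀^T g(t) f_n(t) dt → ∫₀^T g(t) f(t) dt for every continuous g : [0,T] → ℝ (weak convergence of the measures f_n dt to f dt); (ii) ∫₀^t f_n(s) ds → ∫₀^t f(s) ds for every t ∈ [0,T]; (iii) sup_{t∈[0,T]} | ∫₀^t (f_n(s) − f(s)) ds | → 0 as n → ∞. -/
/-!
Write `ψₙ = fₙ - f` and `Ψₙ(t) = ∫₀ᵗ ψₙ`. Since `|ψₙ| ≤ 1`, the `Ψₙ` are `1`-Lipschitz, so by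
Ascoli pointwise convergence of `Ψₙ` to `0` on the compact interval `[0,T]` is the same as uniform
convergence, i.e. `(ii) ⇔ (iii)`. For `(i) ⇒ (ii)`, test against a continuous cutoff which differs
from the indicator of `[0,t]` only on an interval of length `δ`; this costs at most `δ`, uniformly
in `n`. For `(ii) ⇒ (i)`, integrate by parts against a polynomial `p` (`Ψₙ` is absolutely
continuous): `∫₀ᵀ p ψₙ = p(T) Ψₙ(T) - ∫₀ᵀ p' Ψₙ → 0` by dominated convergence, and a general
continuous `g` is uniformly close to such a `p` on `[0,T]` by Weierstrass.
-/

open Set MeasureTheory Filter Topology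
open scoped NNReal

lemma tendsto_zero_of_forall_approx {ι E : Type*} [SeminormedAddCommGroup E] {l : Filter ι}
    {u : ι → E} (h : ∀ ε > 0, ∃ v : ι → E, Tendsto v l (𝓝 0) ∧ ∀ i, ‖u i - v i‖ ≤ ε) :
    Tendsto u l (𝓝 0) := by
  refine Metric.tendsto_nhds.2 fun ε hε => ?_
  obtain ⟨v, hv, huv⟩ := h (ε / 2) (half_pos hε)
  filter_upwards [Metric.tendsto_nhds.1 hv (ε / 2) (half_pos hε)] with i hi
  rw [dist_zero_right] at hi ⊢
  linarith [norm_le_norm_sub_add (u i) (v i), huv i]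

lemma tendsto_iSup_abs_iff_tendstoUniformly {ι X : Type*} {l : Filter ι} {F : ι → X → ℝ}
    (hF : ∀ i, BddAbove (range fun x => |F i x|)) :
    Tendsto (fun i => ⨆ x, |F i x|) l (𝓝 0) ↔ TendstoUniformly F 0 l := by
  simp only [Metric.tendstoUniformly_iff, Metric.tendsto_nhds, Pi.zero_apply, dist_zero_left,
    Real.norm_eq_abs, dist_zero_right]
  refine ⟨fun h ε hε => ?_, fun h ε hε => ?_⟩
  · filter_upwards [h ε hε] with i hi x
    exact (le_ciSup (hF i) x).trans_lt ((le_abs_self _).trans_lt hi)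
  · filter_upwards [h (ε / 2) (half_pos hε)] with i hi
    rw [abs_of_nonneg (Real.iSup_nonneg fun x => abs_nonneg _)]
    exact (Real.iSup_le (fun x => (hi x).le) (half_pos hε).le).trans_lt (half_lt_self hε)

lemma MeasureTheory.IntegrableOn.intervalIntegrable_of_mem_Icc {ψ : ℝ → ℝ} {a b s t : ℝ}
    (hψ : IntegrableOn ψ (Icc a b)) (hs : s ∈ Icc a b) (ht : t ∈ Icc a b) :
    IntervalIntegrable ψ volume s t :=
  (hψ.mono_set (uIcc_subset_Icc hs ht)).intervalIntegrable

lemma integrableOn_Icc_of_mem_Icc_zero_one {φ : ℝ → ℝ} {a b : ℝ} (hφ : Measurable φ)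
    (h : ∀ x ∈ Icc a b, φ x ∈ Icc (0 : ℝ) 1) : IntegrableOn φ (Icc a b) :=
  Measure.integrableOn_of_bounded measure_Icc_lt_top.ne hφ.aestronglyMeasurable (M := 1)
    ((ae_restrict_iff' measurableSet_Icc).2 (.of_forall fun x hx => by
      rw [Real.norm_eq_abs, abs_le]
      exact ⟨by linarith [(h x hx).1], (h x hx).2⟩))

lemma lipschitzWith_primitive_restrict {ψ : ℝ → ℝ} {a b : ℝ} {C : ℝ≥0}
    (hψ : IntegrableOn ψ (Icc a b)) (hψC : ∀ x ∈ Icc a b, |ψ x| ≤ C) :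
    LipschitzWith C fun t : Icc a b => ∫ s in a..t, ψ s := by
  refine LipschitzWith.of_dist_le_mul fun s t => ?_
  have ha : a ∈ Icc a b := left_mem_Icc.2 (s.2.1.trans s.2.2)
  rw [Real.dist_eq, intervalIntegral.integral_interval_sub_left
    (hψ.intervalIntegrable_of_mem_Icc ha s.2) (hψ.intervalIntegrable_of_mem_Icc ha t.2),
    Subtype.dist_eq, Real.dist_eq, ← Real.norm_eq_abs]
  exact intervalIntegral.norm_integral_le_of_norm_le_const fun x hx =>
    hψC x (uIcc_subset_Icc t.2 s.2 (uIoc_subset_uIcc hx))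

section Cutoff

noncomputable def linearCutoff (t δ s : ℝ) : ℝ := max 0 (min 1 ((t + δ - s) / δ))

lemma continuous_linearCutoff (t δ : ℝ) : Continuous (linearCutoff t δ) := by
  unfold linearCutoff
  fun_prop

lemma abs_linearCutoff_le_one (t δ s : ℝ) : |linearCutoff t δ s| ≤ 1 :=
  abs_le.2 ⟨(neg_nonpos.2 zero_le_one).trans (le_max_left _ _),
    max_le zero_le_one (min_le_left _ _)⟩

lemma abs_linearCutoff_sub_indicator_le {t δ : ℝ} (hδ : 0 < δ) (s : ℝ) :
    |linearCutoff t δ s - (Iic t).indicator 1 s| ≤ (Ioo t (t + δ)).indicator 1 s := by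
  unfold linearCutoff
  rcases le_or_gt s t with hst | hts
  · have : 1 ≤ (t + δ - s) / δ := by rw [le_div_iff₀ hδ]; linarith
    simp [hst, this]
  rcases lt_or_ge s (t + δ) with hsδ | hsδ
  · have h0 : 0 ≤ (t + δ - s) / δ := div_nonneg (by linarith) hδ.le
    have h1 : (t + δ - s) / δ ≤ 1 := by rw [div_le_one hδ]; linarith
    rw [indicator_of_notMem (s := Iic t) (not_le.2 hts), indicator_of_mem (s := Ioo _ _) ⟨hts, hsδ⟩,
      min_eq_right h1, max_eq_right h0, sub_zero, Pi.one_apply, abs_of_nonneg h0]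
    exact h1
  · have : (t + δ - s) / δ ≤ 0 := div_nonpos_of_nonpos_of_nonneg (by linarith) hδ.le
    simp [not_le.2 hts, hsδ, this]

lemma setIntegral_indicator_Iic_eq_intervalIntegral {ψ : ℝ → ℝ} {a b t : ℝ}
    (ht : t ∈ Icc a b) : ∫ s in Icc a b, (Iic t).indicator ψ s = ∫ s in a..t, ψ s := by
  have : Icc a b ∩ Iic t = Icc a t := by
    ext x
    simp only [mem_inter_iff, mem_Icc, mem_Iic]
    exact ⟨fun h => ⟨h.1.1, h.2⟩, fun h => ⟨⟨h.1, h.2.trans ht.2⟩, h.2⟩⟩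
  rw [setIntegral_indicator measurableSet_Iic, this, integral_Icc_eq_integral_Ioc,
    intervalIntegral.integral_of_le ht.1]

lemma abs_setIntegral_linearCutoff_mul_sub_le {ψ : ℝ → ℝ} {a b t δ C : ℝ}
    (hψ : IntegrableOn ψ (Icc a b)) (hψC : ∀ x ∈ Icc a b, |ψ x| ≤ C) (ht : t ∈ Icc a b)
    (hδ : 0 < δ) :
    |(∫ s in Icc a b, linearCutoff t δ s * ψ s) - ∫ s in a..t, ψ s| ≤ C * δ := by
  have hC : 0 ≤ C := (abs_nonneg _).trans (hψC t ht)
  rw [← setIntegral_indicator_Iic_eq_intervalIntegral ht, ← integral_sub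
    (hψ.bdd_mul (c := 1) (continuous_linearCutoff t δ).aestronglyMeasurable
      (.of_forall (abs_linearCutoff_le_one t δ)))
    (hψ.indicator measurableSet_Iic)]
  have hle : ∀ s ∈ Icc a b, ‖linearCutoff t δ s * ψ s - (Iic t).indicator ψ s‖ ≤
      (Ioo t (t + δ)).indicator 1 s * C := by
    intro s hs
    have : (Iic t).indicator ψ s = (Iic t).indicator 1 s * ψ s := by
      by_cases h : s ∈ Iic t <;> simp [h]
    rw [this, ← sub_mul, Real.norm_eq_abs, abs_mul]
    exact mul_le_mul (abs_linearCutoff_sub_indicator_le hδ s) (hψC s hs) (abs_nonneg _)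
      (indicator_nonneg (fun _ _ => zero_le_one) s)
  calc _ ≤ ∫ s in Icc a b, (Ioo t (t + δ)).indicator 1 s * C :=
        norm_integral_le_of_norm_le
          (((integrable_const 1).indicator measurableSet_Ioo).mul_const C)
          ((ae_restrict_iff' measurableSet_Icc).2 (.of_forall hle))
    _ ≤ C * δ := by
      rw [integral_mul_const, integral_indicator_one measurableSet_Ioo,
        measureReal_restrict_apply measurableSet_Ioo, mul_comm]
      gcongr
      calc volume.real (Ioo t (t + δ) ∩ Icc a b) ≤ volume.real (Ioo t (t + δ)) :=
            measureReal_mono inter_subset_left measure_Ioo_lt_top.ne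
        _ = δ := by simp [hδ.le]

end Cutoff

lemma intervalIntegral.integral_mul_eq_sub_integral_deriv_mul_primitive {g ψ : ℝ → ℝ}
    {a b : ℝ} (hg : ContDiff ℝ 1 g) (hψ : IntervalIntegrable ψ volume a b) :
    ∫ x in a..b, g x * ψ x =
      g b * (∫ x in a..b, ψ x) - ∫ x in a..b, deriv g x * ∫ y in a..x, ψ y := by
  have hΨ := hψ.absolutelyContinuousOnInterval_intervalIntegral (c := a) left_mem_uIcc
  have ibp := hg.contDiffOn.absolutelyContinuousOnInterval.integral_mul_deriv_eq_deriv_mul hΨ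
  rw [intervalIntegral.integral_same, mul_zero, sub_zero] at ibp
  rw [← ibp]
  refine intervalIntegral.integral_congr_ae ?_
  filter_upwards [hψ.ae_hasDerivAt_integral] with x hx hxab
  rw [(hx (uIoc_subset_uIcc hxab) a left_mem_uIcc).deriv]

section Family

variable {ι : Type*} {l : Filter ι} {ψ : ι → ℝ → ℝ} {a b : ℝ} {C : ℝ≥0}

theorem tendsto_primitive_iff_tendsto_iSup_abs (hψ : ∀ i, IntegrableOn (ψ i) (Icc a b))
    (hψC : ∀ i, ∀ x ∈ Icc a b, |ψ i x| ≤ C) :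
    (∀ t ∈ Icc a b, Tendsto (fun i => ∫ s in a..t, ψ i s) l (𝓝 0)) ↔
      Tendsto (fun i => ⨆ t : Icc a b, |∫ s in a..(t : ℝ), ψ i s|) l (𝓝 0) := by
  have hlip i := lipschitzWith_primitive_restrict (hψ i) (hψC i)
  have uniform_iff_pi := (UniformFun.tendsto_iff_tendstoUniformly (p := l)).symm.trans
    ((LipschitzWith.uniformEquicontinuous _ C hlip).equicontinuous.tendsto_uniformFun_iff_pi l 0)
  rw [tendsto_iSup_abs_iff_tendstoUniformly fun i =>
      (isCompact_range (hlip i).continuous.abs).bddAbove]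
  exact (uniform_iff_pi.trans (tendsto_pi_nhds.trans Subtype.forall)).symm

theorem tendsto_primitive_of_tendsto_setIntegral_mul (hψ : ∀ i, IntegrableOn (ψ i) (Icc a b))
    (hψC : ∀ i, ∀ x ∈ Icc a b, |ψ i x| ≤ C)
    (h : ∀ g : ℝ → ℝ, Continuous g → Tendsto (fun i => ∫ x in Icc a b, g x * ψ i x) l (𝓝 0))
    (t : ℝ) (ht : t ∈ Icc a b) : Tendsto (fun i => ∫ s in a..t, ψ i s) l (𝓝 0) := by
  refine tendsto_zero_of_forall_approx fun ε hε =>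
    ⟨_, h _ (continuous_linearCutoff t (ε / (C + 1))), fun i => ?_⟩
  rw [Real.norm_eq_abs, abs_sub_comm]
  calc _ ≤ C * (ε / (C + 1)) :=
        abs_setIntegral_linearCutoff_mul_sub_le (hψ i) (hψC i) ht (by positivity)
    _ ≤ ε := by
        rw [mul_div_assoc', div_le_iff₀ (by positivity)]
        nlinarith [C.2]

lemma tendsto_intervalIntegral_mul_of_tendsto_primitive [l.IsCountablyGenerated] (hab : a ≤ b)
    (hψ : ∀ i, IntegrableOn (ψ i) (Icc a b)) (hψC : ∀ i, ∀ x ∈ Icc a b, |ψ i x| ≤ C)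
    (h : ∀ t ∈ Icc a b, Tendsto (fun i => ∫ s in a..t, ψ i s) l (𝓝 0))
    {g : ℝ → ℝ} (hg : ContDiff ℝ 1 g) :
    Tendsto (fun i => ∫ x in a..b, g x * ψ i x) l (𝓝 0) := by
  have ha : a ∈ Icc a b := left_mem_Icc.2 hab
  have hb : b ∈ Icc a b := right_mem_Icc.2 hab
  have hΙ : uIoc a b ⊆ Icc a b := uIoc_of_le hab ▸ Ioc_subset_Icc_self
  have hint i := (hψ i).intervalIntegrable_of_mem_Icc ha hb
  have primitive_le i : ∀ x ∈ Icc a b, |∫ y in a..x, ψ i y| ≤ C * (b - a) := fun x hx => by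
    rw [← Real.norm_eq_abs]
    refine (intervalIntegral.norm_integral_le_of_norm_le_const fun y hy =>
      hψC i y (uIcc_subset_Icc ha hx (uIoc_subset_uIcc hy))).trans ?_
    rw [abs_of_nonneg (sub_nonneg.2 hx.1)]
    gcongr
    exact hx.2
  have interior : Tendsto (fun i => ∫ x in a..b, deriv g x * ∫ y in a..x, ψ i y) l (𝓝 0) := by
    have hg' := hg.continuous_deriv le_rfl
    simpa using intervalIntegral.tendsto_integral_filter_of_dominated_convergence
      (F := fun i x => deriv g x * ∫ y in a..x, ψ i y) (fun x => |deriv g x| * (C * (b - a)))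
      (.of_forall fun i => ((hg'.continuousOn.mul (intervalIntegral.continuousOn_primitive_interval'
        (hint i) left_mem_uIcc)).mono uIoc_subset_uIcc).aestronglyMeasurable measurableSet_uIoc)
      (.of_forall fun i => .of_forall fun x hx => by
        rw [Real.norm_eq_abs, abs_mul]
        exact mul_le_mul_of_nonneg_left (primitive_le i x (hΙ hx)) (abs_nonneg _))
      ((hg'.abs.mul continuous_const).intervalIntegrable _ _)
      (.of_forall fun x hx => (h x (hΙ hx)).const_mul (deriv g x))
  simp_rw [intervalIntegral.integral_mul_eq_sub_integral_deriv_mul_primitive hg (hint _)]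
  simpa using ((h b hb).const_mul (g b)).sub interior

theorem tendsto_setIntegral_mul_of_tendsto_primitive [l.IsCountablyGenerated] (hab : a ≤ b)
    (hψ : ∀ i, IntegrableOn (ψ i) (Icc a b)) (hψC : ∀ i, ∀ x ∈ Icc a b, |ψ i x| ≤ C)
    (h : ∀ t ∈ Icc a b, Tendsto (fun i => ∫ s in a..t, ψ i s) l (𝓝 0)) (g : ℝ → ℝ)
    (hg : Continuous g) : Tendsto (fun i => ∫ x in Icc a b, g x * ψ i x) l (𝓝 0) := by
  refine tendsto_zero_of_forall_approx fun ε hε => ?_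
  set η := ε / (C * (b - a) + 1)
  have hη : 0 < η := div_pos hε (by nlinarith [C.2, sub_nonneg.2 hab])
  obtain ⟨p, hp⟩ := exists_polynomial_near_of_continuousOn a b g hg.continuousOn η hη
  refine ⟨fun i => ∫ x in Icc a b, p.eval x * ψ i x, ?_, fun i => ?_⟩
  · simp_rw [integral_Icc_eq_integral_Ioc, ← intervalIntegral.integral_of_le hab]
    exact tendsto_intervalIntegral_mul_of_tendsto_primitive hab hψ hψC h
      (by simpa using p.contDiff_aeval (𝕜 := ℝ) 1)
  rw [← integral_sub ((hψ i).continuousOn_mul hg.continuousOn isCompact_Icc)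
    ((hψ i).continuousOn_mul p.continuous.continuousOn isCompact_Icc)]
  calc _ ≤ η * C * volume.real (Icc a b) := by
        refine norm_setIntegral_le_of_norm_le_const measure_Icc_lt_top fun x hx => ?_
        rw [← sub_mul, Real.norm_eq_abs, abs_mul, abs_sub_comm]
        exact mul_le_mul (hp x hx).le (hψC i x hx) (abs_nonneg _) hη.le
    _ ≤ ε := by
        rw [Real.volume_real_Icc_of_le hab, mul_assoc, div_mul_eq_mul_div,
          div_le_iff₀ (by positivity)]
        nlinarith

end Family

/-- for measurable functions `f_n, f : [0,T] → [0,1]` the following are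
equivalent: (i) weak convergence of the measures `f_n dt` to `f dt` (integrals against all
continuous test functions converge); (ii) pointwise convergence of the primitives
`∫₀^t f_n → ∫₀^t f` for every `t ∈ [0,T]`; (iii) uniform convergence of the primitives,
i.e. `sup_{t∈[0,T]} |∫₀^t (f_n − f)| → 0`. -/
theorem stmt15 (T : ℝ) (hT : 0 < T)
    (fn : ℕ → ℝ → ℝ) (f : ℝ → ℝ)
    (hfnmeas : ∀ n, Measurable (fn n)) (hfmeas : Measurable f)
    (hfnmem : ∀ n, ∀ t ∈ Set.Icc (0:ℝ) T, fn n t ∈ Set.Icc (0:ℝ) 1)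
    (hfmem : ∀ t ∈ Set.Icc (0:ℝ) T, f t ∈ Set.Icc (0:ℝ) 1) :
    ((∀ g : ℝ → ℝ, Continuous g →
        Filter.Tendsto (fun n => ∫ t in Set.Icc (0:ℝ) T, g t * fn n t)
          Filter.atTop (nhds (∫ t in Set.Icc (0:ℝ) T, g t * f t))) ↔
      (∀ t ∈ Set.Icc (0:ℝ) T,
        Filter.Tendsto (fun n => ∫ s in (0:ℝ)..t, fn n s)
          Filter.atTop (nhds (∫ s in (0:ℝ)..t, f s)))) ∧
    ((∀ t ∈ Set.Icc (0:ℝ) T,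
        Filter.Tendsto (fun n => ∫ s in (0:ℝ)..t, fn n s)
          Filter.atTop (nhds (∫ s in (0:ℝ)..t, f s))) ↔
      Filter.Tendsto
        (fun n => ⨆ t : Set.Icc (0:ℝ) T, |∫ s in (0:ℝ)..(t:ℝ), (fn n s - f s)|)
        Filter.atTop (nhds 0)) := by
  have hfn n := integrableOn_Icc_of_mem_Icc_zero_one (hfnmeas n) (hfnmem n)
  have hf := integrableOn_Icc_of_mem_Icc_zero_one hfmeas hfmem
  have hψ n : IntegrableOn (fun s => fn n s - f s) (Icc 0 T) := (hfn n).sub hf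
  have hψC n : ∀ s ∈ Icc 0 T, |fn n s - f s| ≤ ((1 : ℝ≥0) : ℝ) := fun s hs => by
    simpa using abs_sub_le_of_nonneg_of_le (hfnmem n s hs).1 (hfnmem n s hs).2
      (hfmem s hs).1 (hfmem s hs).2
  have weak_iff : ∀ g : ℝ → ℝ, Continuous g →
      (Tendsto (fun n => ∫ t in Icc 0 T, g t * fn n t) atTop (𝓝 (∫ t in Icc 0 T, g t * f t)) ↔
        Tendsto (fun n => ∫ t in Icc 0 T, g t * (fn n t - f t)) atTop (𝓝 0)) := fun g hg => by
    rw [← tendsto_sub_nhds_zero_iff]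
    refine tendsto_congr fun n => ?_
    simp_rw [mul_sub]
    exact (integral_sub ((hfn n).continuousOn_mul hg.continuousOn isCompact_Icc)
      (hf.continuousOn_mul hg.continuousOn isCompact_Icc)).symm
  have primitive_iff : ∀ t ∈ Icc 0 T,
      (Tendsto (fun n => ∫ s in 0..t, fn n s) atTop (𝓝 (∫ s in 0..t, f s)) ↔
        Tendsto (fun n => ∫ s in 0..t, (fn n s - f s)) atTop (𝓝 0)) := fun t ht => by
    have h0 : (0 : ℝ) ∈ Icc 0 T := left_mem_Icc.2 hT.le
    rw [← tendsto_sub_nhds_zero_iff]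
    exact tendsto_congr fun n => (intervalIntegral.integral_sub
      ((hfn n).intervalIntegrable_of_mem_Icc h0 ht) (hf.intervalIntegrable_of_mem_Icc h0 ht)).symm
  simp only [forall₂_congr weak_iff, forall₂_congr primitive_iff]
  exact ⟨⟨tendsto_primitive_of_tendsto_setIntegral_mul hψ hψC,
    tendsto_setIntegral_mul_of_tendsto_primitive hT.le hψ hψC⟩,
    tendsto_primitive_iff_tendsto_iSup_abs hψ hψC⟩
end

section
/- Let Γ be a finite set and ρ : [0,T] → [0,1]^Γ be measurable with Σ_{σ∈Γ} ρ_σ(t) = 1 for almost every t ∈ [0,T]. Then there exists a sequence ρ^{(n)} : [0,T] → (0,1]^Γ such that for each n and each σ ∈ Γ the function ρ^{(n)}_σ is continuously differentiable on [0,T] and strictly positive, Σ_{σ∈Γ} ρ^{(n)}_σ(t) = 1 for every t ∈ [0,T], and for each σ ∈ Γ, ρ^{(n)}_σ → ρ_σ in L¹([0,T]) as n → ∞. -/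
/-!
Extend `ρ` off `[0, T]`, and off the null set where `∑ σ, ρ σ ≠ 1`, by the barycentre of the
simplex, so that it takes values in the simplex everywhere. Convolution with a normalised
nonnegative bump preserves `[0, 1]`-valuedness and the constraint `∑ σ, ρ σ = 1`, produces smooth
functions, and converges almost everywhere as the support shrinks (Lebesgue differentiation).
Mixing in the barycentre with a vanishing weight makes all coordinates strictly positive, and
dominated convergence upgrades the almost-everywhere convergence to `L¹([0, T])`.
-/

open Set MeasureTheory Filter Topology ContinuousLinearMap
open scoped Convolution

namespace ContDiffBump

variable {G : Type*} [NormedAddCommGroup G] [NormedSpace ℝ G] [FiniteDimensional ℝ G]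
  [MeasurableSpace G] [BorelSpace G] {μ : Measure G} [μ.IsAddHaarMeasure]
  (φ : ContDiffBump (0 : G))

theorem normed_convolution_const (c : ℝ) (x : G) :
    (φ.normed μ ⋆[lsmul ℝ ℝ, μ] fun _ => c) x = c :=
  φ.normed_convolution_eq_right fun _ _ => rfl

theorem normed_convolution_mem_Icc {g : G → ℝ} {a b : ℝ} (hg : LocallyIntegrable g μ)
    (hab : ∀ y, g y ∈ Icc a b) (x : G) : (φ.normed μ ⋆[lsmul ℝ ℝ, μ] g) x ∈ Icc a b := by
  have hexists : ∀ {f : G → ℝ}, LocallyIntegrable f μ →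
      ConvolutionExistsAt (φ.normed μ) f x (lsmul ℝ ℝ) μ := fun hf =>
    φ.hasCompactSupport_normed.convolutionExists_left _ φ.continuous_normed hf x
  have hconst := fun c : ℝ => hexists (locallyIntegrable_const (μ := μ) c)
  constructor
  · simpa only [normed_convolution_const] using
      convolution_mono_right (hconst a) (hexists hg) φ.nonneg_normed fun y => (hab y).1
  · simpa only [normed_convolution_const] using
      convolution_mono_right (hexists hg) (hconst b) φ.nonneg_normed fun y => (hab y).2

theorem sum_normed_convolution {ι : Type*} (s : Finset ι) {g : ι → G → ℝ}
    (hg : ∀ i ∈ s, LocallyIntegrable (g i) μ) (x : G) :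
    ∑ i ∈ s, (φ.normed μ ⋆[lsmul ℝ ℝ, μ] g i) x =
      (φ.normed μ ⋆[lsmul ℝ ℝ, μ] fun y => ∑ i ∈ s, g i y) x := by
  simp only [convolution_def, lsmul_apply, Finset.smul_sum]
  refine (integral_finsetSum s fun i hi => ?_).symm
  simpa only [ConvolutionExistsAt, lsmul_apply] using
    φ.hasCompactSupport_normed.convolutionExists_left (lsmul ℝ ℝ) φ.continuous_normed (hg i hi) x

end ContDiffBump

section Mollification

variable {G : Type*} [NormedAddCommGroup G] [NormedSpace ℝ G] [FiniteDimensional ℝ G]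
  [MeasurableSpace G] [BorelSpace G] {μ : Measure G} [μ.IsAddHaarMeasure]

noncomputable def shrinkingBump (n : ℕ) : ContDiffBump (0 : G) where
  rIn := 1 / (n + 1) / 2
  rOut := 1 / (n + 1)
  rIn_pos := by positivity
  rIn_lt_rOut := half_lt_self (by positivity)

theorem ae_tendsto_shrinkingBump_convolution {E : Type*} [NormedAddCommGroup E]
    [NormedSpace ℝ E] [CompleteSpace E] {g : G → E} (hg : LocallyIntegrable g μ) :
    ∀ᵐ x ∂μ, Tendsto (fun n => ((shrinkingBump n).normed μ ⋆[lsmul ℝ ℝ, μ] g) x) atTop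
      (𝓝 (g x)) :=
  ContDiffBump.ae_convolution_tendsto_right_of_locallyIntegrable (K := 2)
    tendsto_one_div_add_atTop_nhds_zero_nat
    (Eventually.of_forall fun _ => (mul_div_cancel₀ _ two_ne_zero).ge) hg

variable {Γ : Type*} [Fintype Γ]

/-- Mixing in the barycentre of the simplex with weight `1 / (n + 1)` makes every coordinate
strictly positive. -/
noncomputable def simplexMollify (μ : Measure G) (q : G → Γ → ℝ) (n : ℕ) (x : G) (σ : Γ) : ℝ :=
  (1 - 1 / (n + 1)) * ((shrinkingBump n).normed μ ⋆[lsmul ℝ ℝ, μ] fun y => q y σ) x +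
    1 / (n + 1) / Fintype.card Γ

variable {q : G → Γ → ℝ}

theorem contDiff_simplexMollify (hq : ∀ σ, LocallyIntegrable (fun x => q x σ) μ) (n : ℕ)
    (σ : Γ) {k : ℕ∞} : ContDiff ℝ k fun x => simplexMollify μ q n x σ :=
  (contDiff_const.mul ((shrinkingBump n).hasCompactSupport_normed.contDiff_convolution_left _
    (shrinkingBump n).contDiff_normed (hq σ))).add contDiff_const

theorem simplexMollify_mem_Ioc [Nonempty Γ] (hq : ∀ σ, LocallyIntegrable (fun x => q x σ) μ)
    (hq01 : ∀ x σ, q x σ ∈ Icc 0 1) (n : ℕ) (x : G) (σ : Γ) :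
    simplexMollify μ q n x σ ∈ Ioc 0 1 := by
  obtain ⟨hc0, hc1⟩ := (shrinkingBump n).normed_convolution_mem_Icc (hq σ) (hq01 · σ) x
  have hw : 1 / ((n : ℝ) + 1) ∈ Ioc 0 1 :=
    ⟨by positivity, div_le_one_of_le₀ (by linarith [n.cast_nonneg (α := ℝ)]) (by positivity)⟩
  have hk : (1 : ℝ) ≤ Fintype.card Γ := by exact_mod_cast Fintype.card_pos
  have hwk : 1 / ((n : ℝ) + 1) / Fintype.card Γ ∈ Ioc (0 : ℝ) (1 / (n + 1)) :=
    ⟨by positivity, div_le_self hw.1.le hk⟩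
  unfold simplexMollify
  constructor <;> nlinarith [hw.1, hw.2, hwk.1, hwk.2]

theorem sum_simplexMollify [Nonempty Γ] (hq : ∀ σ, LocallyIntegrable (fun x => q x σ) μ)
    (hsum : ∀ x, ∑ σ, q x σ = 1) (n : ℕ) (x : G) : ∑ σ, simplexMollify μ q n x σ = 1 := by
  have hconv : ∑ σ, ((shrinkingBump n).normed μ ⋆[lsmul ℝ ℝ, μ] fun y => q y σ) x = 1 := by
    rw [(shrinkingBump n).sum_normed_convolution _ fun σ _ => hq σ]
    simpa only [hsum] using (shrinkingBump n).normed_convolution_const (μ := μ) 1 x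
  simp only [simplexMollify, Finset.sum_add_distrib, ← Finset.mul_sum, hconv, Finset.sum_const,
    Finset.card_univ, nsmul_eq_mul]
  have hk : (Fintype.card Γ : ℝ) ≠ 0 := by positivity
  field_simp
  ring

theorem ae_tendsto_simplexMollify (hq : ∀ σ, LocallyIntegrable (fun x => q x σ) μ) (σ : Γ) :
    ∀ᵐ x ∂μ, Tendsto (fun n => simplexMollify μ q n x σ) atTop (𝓝 (q x σ)) := by
  filter_upwards [ae_tendsto_shrinkingBump_convolution (hq σ)] with x hx
  have hw := tendsto_one_div_add_atTop_nhds_zero_nat (𝕜 := ℝ)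
  simpa [simplexMollify] using
    (((tendsto_const_nhds (x := (1 : ℝ))).sub hw).mul hx).add (hw.div_const (Fintype.card Γ : ℝ))

end Mollification

theorem tendsto_integral_norm_sub_of_ae_tendsto {α E : Type*} [MeasurableSpace α]
    {μ : Measure α} [IsFiniteMeasure μ] [NormedAddCommGroup E] {F : ℕ → α → E} {f : α → E}
    {C : ℝ} (hF : ∀ n, AEStronglyMeasurable (F n) μ) (hbound : ∀ n, ∀ᵐ x ∂μ, ‖F n x - f x‖ ≤ C)
    (hlim : ∀ᵐ x ∂μ, Tendsto (fun n => F n x) atTop (𝓝 (f x))) :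
    Tendsto (fun n => ∫ x, ‖F n x - f x‖ ∂μ) atTop (𝓝 0) := by
  have hf : AEStronglyMeasurable f μ := aestronglyMeasurable_of_tendsto_ae _ hF hlim
  simpa using tendsto_integral_of_dominated_convergence (fun _ => C)
    (fun n => ((hF n).sub hf).norm) (integrable_const C)
    (fun n => (hbound n).mono fun x hx => by rwa [norm_norm])
    (hlim.mono fun x hx => (tendsto_iff_norm_sub_tendsto_zero.mp hx))

theorem exists_simplex_valued_ae_eq_restrict {α Γ : Type*} [MeasurableSpace α] [Fintype Γ]
    [Nonempty Γ] {μ : Measure α} {s : Set α} (hs : MeasurableSet s) {ρ : α → Γ → ℝ}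
    (hmeas : ∀ σ, Measurable fun x => ρ x σ) (hmem : ∀ x ∈ s, ∀ σ, ρ x σ ∈ Icc 0 1)
    (hsum : ∀ᵐ x ∂μ.restrict s, ∑ σ, ρ x σ = 1) :
    ∃ q : α → Γ → ℝ, (∀ σ, Measurable fun x => q x σ) ∧ (∀ x σ, q x σ ∈ Icc 0 1) ∧
      (∀ x, ∑ σ, q x σ = 1) ∧ ∀ᵐ x ∂μ.restrict s, q x = ρ x := by
  classical
  set E := s ∩ {x | ∑ σ, ρ x σ = 1}
  have hE : MeasurableSet E :=
    hs.inter (measurableSet_eq_fun (Finset.measurable_sum _ fun σ _ => hmeas σ) measurable_const)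
  have hk : (Fintype.card Γ : ℝ) ≠ 0 := by positivity
  refine ⟨fun x σ => if x ∈ E then ρ x σ else (Fintype.card Γ : ℝ)⁻¹,
    fun σ => Measurable.ite hE (hmeas σ) measurable_const, fun x σ => ?_, fun x => ?_, ?_⟩
  · dsimp only
    split_ifs with hx
    · exact hmem x hx.1 σ
    · exact ⟨by positivity, inv_le_one_of_one_le₀ (by exact_mod_cast Fintype.card_pos)⟩
  · by_cases hx : x ∈ E
    · simpa [hx] using hx.2
    · simp [hx, hk]
  · filter_upwards [hsum, ae_restrict_mem hs] with x hx hxs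
    funext σ
    simp [E, hx, hxs]

/-- any measurable `ρ : [0,T] → [0,1]^Γ` with `Σ_σ ρ_σ = 1` a.e. can be
approximated in `L¹([0,T])`, componentwise, by functions `ρ^{(n)} : [0,T] → (0,1]^Γ` that
are `C¹` on `[0,T]`, strictly positive, and satisfy `Σ_σ ρ^{(n)}_σ(t) = 1` everywhere. -/
theorem stmt16 {Γ : Type*} [Fintype Γ] (T : ℝ) (hT : 0 < T)
    (ρ : ℝ → Γ → ℝ)
    (hρmeas : ∀ σ : Γ, Measurable fun t => ρ t σ)
    (hρmem : ∀ t ∈ Set.Icc (0:ℝ) T, ∀ σ : Γ, ρ t σ ∈ Set.Icc (0:ℝ) 1)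
    (hρsum : ∀ᵐ t ∂(volume.restrict (Set.Icc (0:ℝ) T)), ∑ σ : Γ, ρ t σ = 1) :
    ∃ ρn : ℕ → ℝ → Γ → ℝ,
      (∀ n, ∀ σ : Γ, ContDiffOn ℝ 1 (fun t => ρn n t σ) (Set.Icc 0 T)) ∧
      (∀ n, ∀ t ∈ Set.Icc (0:ℝ) T, ∀ σ : Γ, 0 < ρn n t σ ∧ ρn n t σ ≤ 1) ∧
      (∀ n, ∀ t ∈ Set.Icc (0:ℝ) T, ∑ σ : Γ, ρn n t σ = 1) ∧
      (∀ σ : Γ,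
        Filter.Tendsto (fun n => ∫ t in Set.Icc (0:ℝ) T, |ρn n t σ - ρ t σ|)
          Filter.atTop (nhds 0)) := by
  have : Nonempty Γ := by
    by_contra hΓ
    rw [not_nonempty_iff] at hΓ
    simp only [Finset.univ_eq_empty, Finset.sum_empty, zero_ne_one, eventually_false_iff_eq_bot,
      ae_eq_bot, Measure.restrict_eq_zero, Real.volume_Icc, ENNReal.ofReal_eq_zero] at hρsum
    linarith
  obtain ⟨q, hq_meas, hq01, hq_sum, hq_ae⟩ :=
    exists_simplex_valued_ae_eq_restrict measurableSet_Icc hρmeas hρmem hρsum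
  have hq_loc : ∀ σ, LocallyIntegrable (fun t => q t σ) volume := fun σ =>
    (locallyIntegrable_const (1 : ℝ)).mono (hq_meas σ).aestronglyMeasurable <|
      ae_of_all _ fun t => by
        rw [norm_one, Real.norm_eq_abs, abs_le]
        exact ⟨by linarith [(hq01 t σ).1], (hq01 t σ).2⟩
  refine ⟨simplexMollify volume q, fun n σ => (contDiff_simplexMollify hq_loc n σ).contDiffOn,
    fun n t _ σ => simplexMollify_mem_Ioc hq_loc hq01 n t σ,
    fun n t _ => sum_simplexMollify hq_loc hq_sum n t, fun σ => ?_⟩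
  refine tendsto_integral_norm_sub_of_ae_tendsto (C := 1)
    (fun n => (contDiff_simplexMollify hq_loc n σ (k := 0)).continuous.aestronglyMeasurable)
    (fun n => ?_) ?_
  · filter_upwards [hq_ae] with t ht
    rw [Real.norm_eq_abs, abs_le, ← ht]
    have := simplexMollify_mem_Ioc hq_loc hq01 n t σ
    constructor <;> linarith [this.1, this.2, (hq01 t σ).1, (hq01 t σ).2]
  · filter_upwards [ae_restrict_of_ae (ae_tendsto_simplexMollify hq_loc σ), hq_ae] with t ht hqt
    rwa [← hqt]
end
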